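/- arXiv:1405.7299 — 8 statements merged into one kernel-verified Lean document; each statement's English description precedes it below -/
import Mathlib

section
/- If a closed walk W in a graph G has underlying subgraph a tree, and a vertex v has degree m in that tree, then v occurs at least m times in W. -/
/-!
In a closed walk, for any vertex set `S` the steps leaving `S` are as many as those entering it.
In a tree every edge `uw` is a bridge; taking `S` to be the side of `w`, the only steps crossing
`S` are `u → w` and `w → u`, so the walk traverses each of its edges in both directions. Hence
every tree neighbour `w` of `u` gives a step `w → u` of the walk, and distinct neighbours give
distinct arrivals at `u`.
-/

namespace SimpleGraph.Walk

variable {V : Type*} {G : SimpleGraph V}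

theorem countP_darts_exit_add_eq (S : Set V) [DecidablePred (· ∈ S)] :
    ∀ {a b : V} (p : G.Walk a b),
      p.darts.countP (fun d => d.fst ∈ S ∧ d.snd ∉ S) + (if b ∈ S then 1 else 0) =
        p.darts.countP (fun d => d.fst ∉ S ∧ d.snd ∈ S) + (if a ∈ S then 1 else 0)
  | _, _, nil => rfl
  | a, _, cons (v := c) _ q => by
    have ih := countP_darts_exit_add_eq S q
    simp only [darts_cons, List.countP_cons] at ih ⊢
    by_cases ha : a ∈ S <;> by_cases hc : c ∈ S <;> simp [ha, hc] at ih ⊢ <;> omega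

theorem countP_darts_exit_eq_entry {v : V} (p : G.Walk v v) (S : Set V) [DecidablePred (· ∈ S)] :
    p.darts.countP (fun d => d.fst ∈ S ∧ d.snd ∉ S) =
      p.darts.countP (fun d => d.fst ∉ S ∧ d.snd ∈ S) :=
  Nat.add_right_cancel (countP_darts_exit_add_eq S p)

theorem symm_mem_darts_of_isBridge {v : V} (p : G.Walk v v) {d : G.Dart} (hd : d ∈ p.darts)
    (hbr : G.IsBridge d.edge) : d.symm ∈ p.darts := by
  classical
  set S : Set V := {x | (G.deleteEdges {d.edge}).Reachable d.snd x}
  have hsnd : d.snd ∈ S := Reachable.refl _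
  have hfst : d.fst ∉ S := fun h => hbr h.symm
  have crossing : ∀ e : G.Dart, e.edge ≠ d.edge → (e.fst ∈ S ↔ e.snd ∈ S) := fun e he =>
    have hadj : (G.deleteEdges {d.edge}).Adj e.fst e.snd := (deleteEdges_adj ..).2 ⟨e.adj, he⟩
    ⟨fun h => h.trans hadj.reachable, fun h => h.trans hadj.symm.reachable⟩
  obtain ⟨e, he, he_exit⟩ : ∃ e ∈ p.darts, e.fst ∈ S ∧ e.snd ∉ S := by
    have hentry : 0 < p.darts.countP (fun e => e.fst ∉ S ∧ e.snd ∈ S) :=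
      List.countP_pos_iff.2 ⟨d, hd, by simp [hfst, hsnd]⟩
    obtain ⟨e, he, he_exit⟩ := List.countP_pos_iff.1 (countP_darts_exit_eq_entry p S ▸ hentry)
    exact ⟨e, he, of_decide_eq_true he_exit⟩
  rcases (dart_edge_eq_iff e d).1 (not_not.1 fun h => he_exit.2 ((crossing e h).1 he_exit.1))
    with rfl | rfl
  · exact absurd he_exit.1 hfst
  · simpa using he

theorem _root_.SimpleGraph.IsAcyclic.symm_mem_darts (hG : G.IsAcyclic) {v : V} (p : G.Walk v v)
    {d : G.Dart} (hd : d ∈ p.darts) : d.symm ∈ p.darts :=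
  p.symm_mem_darts_of_isBridge hd (isAcyclic_iff_forall_isBridge.1 hG d.edge_mem)

theorem symm_mem_darts_of_isAcyclic_toSubgraph {v : V} (p : G.Walk v v)
    (hp : p.toSubgraph.coe.IsAcyclic) {d : G.Dart} (hd : d ∈ p.darts) : d.symm ∈ p.darts := by
  have hdarts : p.darts = p.mapToSubgraph.darts.map p.toSubgraph.hom.mapDart :=
    (congrArg darts p.map_mapToSubgraph_hom).symm.trans (darts_map ..)
  rw [hdarts] at hd ⊢
  obtain ⟨d', hd', rfl⟩ := List.mem_map.1 hd
  exact List.mem_map.2 ⟨d'.symm, hp.symm_mem_darts _ hd', rfl⟩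

theorem exists_mem_darts_of_toSubgraph_adj {v : V} (p : G.Walk v v)
    (hp : p.toSubgraph.coe.IsAcyclic) {u w : V} (h : p.toSubgraph.Adj u w) :
    ∃ d ∈ p.darts, d.toProd = (w, u) := by
  obtain ⟨d, hd, hde⟩ := List.mem_map.1 (adj_toSubgraph_iff_mem_edges.1 h)
  rcases (dart_edge_eq_mk'_iff' ..).1 hde with ⟨h1, h2⟩ | ⟨h1, h2⟩
  · exact ⟨d.symm, symm_mem_darts_of_isAcyclic_toSubgraph p hp hd, Prod.ext h2 h1⟩
  · exact ⟨d, hd, Prod.ext h1 h2⟩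

theorem ncard_le_count_support_tail [DecidableEq V] {a b : V} (p : G.Walk a b) (u : V)
    {s : Set V} (hs : ∀ w ∈ s, ∃ d ∈ p.darts, d.toProd = (w, u)) :
    s.ncard ≤ p.support.tail.count u := by
  set L := (p.darts.filter (·.snd = u)).map (·.fst)
  have hsL : s ⊆ ↑L.toFinset := fun w hw => by
    obtain ⟨d, hd, hdwu⟩ := hs w hw
    have hw : d.fst = w ∧ d.snd = u := Prod.ext_iff.1 hdwu
    exact List.mem_toFinset.2
      (List.mem_map.2 ⟨d, List.mem_filter.2 ⟨hd, by simp [hw.2]⟩, hw.1⟩)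
  calc s.ncard ≤ (↑L.toFinset : Set V).ncard := Set.ncard_le_ncard hsL (Finset.finite_toSet _)
    _ = L.toFinset.card := Set.ncard_coe_finset _
    _ ≤ L.length := List.toFinset_card_le _
    _ = p.support.tail.count u := by
      rw [← map_snd_darts, List.count, List.countP_map, List.countP_eq_length_filter,
        List.length_map]
      rfl

end SimpleGraph.Walk

/-- if a closed walk `p` in a graph `G` has underlying subgraph a tree and a
vertex `u` has degree `m` in that tree, then `u` occurs at least `m` times in `p`
(occurrences counted among the vertices `v_1, …, v_r = v_0` of the walk). -/
theorem tree_walk_degree_le_occurrences {V : Type*} [DecidableEq V] (G : SimpleGraph V)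
    (v : V) (p : G.Walk v v) (hp : p.toSubgraph.coe.IsTree) (u : V) (m : ℕ)
    (hdeg : (p.toSubgraph.neighborSet u).ncard = m) :
    m ≤ p.support.tail.count u :=
  hdeg ▸ p.ncard_le_count_support_tail u fun _ hw =>
    p.exists_mem_darts_of_toSubgraph_adj hp.isAcyclic hw
end

section
/- If a graph G fails to be 2s-repeating for some positive integer s (i.e., there is a closed walk of length 2js with j ≥ 2 having no proper closed subwalk of length a positive multiple of 2s), then G fails to be 2r-repeating for all r ≥ s. -/
open SimpleGraph

/-!
Let `W` be a closed walk of length `j * k` without a proper closed subwalk of length a positive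
multiple of `k`. Before each of its `j` blocks of `k` steps, insert `d` round trips along the first
edge of that block. The result is a closed walk of length `j * (k + 2 * d)` whose `n`-th vertex is
the `padIndex k d n`-th vertex of `W`, and shifting `n` by `m * (k + 2 * d)` shifts `padIndex k d n`
by `m * k`. Hence a repetition at distance `m * (k + 2 * d)` in the padded walk is a repetition at
distance `m * k` in `W`, so the padded walk witnesses that `G` is not `(k + 2 * d)`-repeating.
-/

/-- A graph `G` is `k`-repeating if every closed walk of length `j * k` with `j ≥ 2` has a
proper closed subwalk (a contiguous closed subsequence, other than the whole walk) whose
length is a positive multiple of `k`. -/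
def IsKRepeating {V : Type*} (G : SimpleGraph V) (k : ℕ) : Prop :=
  ∀ (v : V) (W : G.Walk v v) (j : ℕ), 2 ≤ j → W.length = j * k →
    ∃ i l : ℕ, 0 < l ∧ k ∣ l ∧ l < W.length ∧ i + l ≤ W.length ∧
      W.getVert i = W.getVert (i + l)

namespace SimpleGraph

variable {V : Type*} {G : SimpleGraph V}

theorem exists_walk_getVert_eq (f : ℕ → V) (L : ℕ) (hadj : ∀ n < L, G.Adj (f n) (f (n + 1))) :
    ∃ W : G.Walk (f 0) (f L), W.length = L ∧ ∀ n ≤ L, W.getVert n = f n := by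
  induction L generalizing f with
  | zero => exact ⟨.nil, rfl, fun n hn => by simp [Nat.le_zero.mp hn]⟩
  | succ L ih =>
    obtain ⟨W, hlen, hget⟩ := ih (fun n => f (n + 1)) fun n hn => hadj (n + 1) (by omega)
    refine ⟨.cons (hadj 0 L.succ_pos) W, by simp [hlen], ?_⟩
    rintro (_ | n) hn
    · simp
    · simpa using hget n (by omega)

theorem Walk.exists_getVert_eq_getVert_comp {u v : V} (W : G.Walk u v) (φ : ℕ → ℕ) (L : ℕ)
    (h0 : φ 0 = 0) (hL : φ L = W.length) (hle : ∀ n ≤ L, φ n ≤ W.length)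
    (hstep : ∀ n < L, φ (n + 1) = φ n + 1 ∨ φ n = φ (n + 1) + 1) :
    ∃ W' : G.Walk u v, W'.length = L ∧ ∀ n ≤ L, W'.getVert n = W.getVert (φ n) := by
  have hadj : ∀ n < L, G.Adj (W.getVert (φ n)) (W.getVert (φ (n + 1))) := by
    intro n hn
    rcases hstep n hn with h | h
    · rw [h]; exact W.adj_getVert_succ (by have := hle (n + 1) hn; omega)
    · rw [h]; exact (W.adj_getVert_succ (by have := hle n hn.le; omega)).symm
  obtain ⟨W', hlen, hget⟩ := exists_walk_getVert_eq (W.getVert ∘ φ) L hadj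
  exact ⟨W'.copy (by simp [h0]) (by simp [hL]), by simpa using hlen, by simpa using hget⟩

end SimpleGraph

/-- Position in the original walk of the `n`-th vertex of the padded walk: each block of `k` steps
is preceded by `d` round trips along its first edge. -/
def padIndex (k d n : ℕ) : ℕ :=
  k * (n / (k + 2 * d)) +
    if n % (k + 2 * d) < 2 * d then n % (k + 2 * d) % 2 else n % (k + 2 * d) - 2 * d

theorem padIndex_mul_add (k d q : ℕ) {o : ℕ} (ho : o < k + 2 * d) :
    padIndex k d ((k + 2 * d) * q + o) = k * q + if o < 2 * d then o % 2 else o - 2 * d := by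
  have hp : 0 < k + 2 * d := by omega
  simp only [padIndex, Nat.mul_add_div hp, Nat.div_eq_of_lt ho, Nat.mul_add_mod,
    Nat.mod_eq_of_lt ho, add_zero]

theorem padIndex_add_mul (k d n m : ℕ) :
    padIndex k d (n + (k + 2 * d) * m) = padIndex k d n + k * m := by
  rcases Nat.eq_zero_or_pos (k + 2 * d) with hp | hp
  · obtain ⟨rfl, rfl⟩ : k = 0 ∧ d = 0 := by omega
    simp
  · simp only [padIndex, Nat.add_mul_div_left _ _ hp, Nat.add_mul_mod_self_left]
    ring

theorem padIndex_zero (k d : ℕ) : padIndex k d 0 = 0 := by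
  simp [padIndex]

theorem padIndex_mul (k d j : ℕ) : padIndex k d ((k + 2 * d) * j) = k * j := by
  simpa [padIndex_zero] using padIndex_add_mul k d 0 j

theorem padIndex_succ (k d n : ℕ) :
    padIndex k d (n + 1) = padIndex k d n + 1 ∨ padIndex k d n = padIndex k d (n + 1) + 1 := by
  rcases Nat.eq_zero_or_pos (k + 2 * d) with hp | hp
  · obtain ⟨rfl, rfl⟩ : k = 0 ∧ d = 0 := by omega
    simp [padIndex]
  obtain ⟨q, o, ho, rfl⟩ : ∃ q o, o < k + 2 * d ∧ n = (k + 2 * d) * q + o :=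
    ⟨_, _, Nat.mod_lt n hp, (Nat.div_add_mod n _).symm⟩
  rw [padIndex_mul_add k d q ho]
  by_cases hlast : o + 1 = k + 2 * d
  · rw [show (k + 2 * d) * q + o + 1 = (k + 2 * d) * (q + 1) + 0 by rw [mul_add]; omega,
      padIndex_mul_add k d (q + 1) hp, mul_add]
    split_ifs <;> omega
  · rw [add_assoc, padIndex_mul_add k d q (by omega)]
    split_ifs <;> omega

theorem padIndex_le {k : ℕ} (hk : 0 < k) (d : ℕ) {j n : ℕ} (hn : n ≤ (k + 2 * d) * j) :
    padIndex k d n ≤ k * j := by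
  obtain ⟨q, o, ho, rfl⟩ : ∃ q o, o < k + 2 * d ∧ n = (k + 2 * d) * q + o :=
    ⟨_, _, Nat.mod_lt n (by omega), (Nat.div_add_mod n _).symm⟩
  rw [padIndex_mul_add k d q ho]
  rcases Nat.lt_or_ge q j with hq | hq
  · have : k * (q + 1) ≤ k * j := Nat.mul_le_mul_left k hq
    split_ifs <;> grind
  · have : (k + 2 * d) * j ≤ (k + 2 * d) * q := Nat.mul_le_mul_left _ hq
    obtain rfl : o = 0 := by omega
    have : q = j := by nlinarith
    simp [this]

theorem not_isKRepeating_add_two_mul {V : Type*} {G : SimpleGraph V} {k : ℕ} (hk : 0 < k)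
    (d : ℕ) (h : ¬ IsKRepeating G k) : ¬ IsKRepeating G (k + 2 * d) := by
  intro hrep
  apply h
  intro v W j hj hW
  obtain ⟨W', hlen', hget'⟩ := W.exists_getVert_eq_getVert_comp (padIndex k d) ((k + 2 * d) * j)
    (padIndex_zero k d) (by rw [padIndex_mul, hW, mul_comm])
    (fun n hn => hW ▸ mul_comm k j ▸ padIndex_le hk d hn) (fun n _ => padIndex_succ k d n)
  obtain ⟨a, _, hl, ⟨m, rfl⟩, hlt, hle, heq⟩ := hrep v W' j hj (by rw [hlen', mul_comm])
  rw [hlen'] at hlt hle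
  rw [hget' a (by omega), hget' _ hle, padIndex_add_mul] at heq
  have hm : 0 < m := Nat.pos_of_ne_zero (by rintro rfl; simp at hl)
  refine ⟨padIndex k d a, k * m, Nat.mul_pos hk hm, dvd_mul_right k m, ?_, ?_, heq⟩
  · rw [hW, mul_comm j]
    exact Nat.mul_lt_mul_of_pos_left (lt_of_mul_lt_mul_left hlt (Nat.zero_le _)) hk
  · rw [← padIndex_add_mul, hW, mul_comm j]
    exact padIndex_le hk d hle

/-- if `G` fails to be `2s`-repeating for some positive integer `s`, then `G`
fails to be `2r`-repeating for all `r ≥ s`. -/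
theorem not_kRepeating_mono {V : Type*} (G : SimpleGraph V) (s : ℕ) (hs : 1 ≤ s)
    (h : ¬ IsKRepeating G (2 * s)) :
    ∀ r : ℕ, s ≤ r → ¬ IsKRepeating G (2 * r) := by
  intro r hr
  have := not_isKRepeating_add_two_mul (by omega) (r - s) h
  rwa [show 2 * s + 2 * (r - s) = 2 * r by omega] at this
end

section
/- A graph G is a forest if and only if G is 2-repeating, if and only if G is 4-repeating. -/
open SimpleGraph

/-!
In a forest, measure each vertex of a closed walk by its distance from the base point. A vertex
has at most one neighbour that is one step closer, so at a deepest vertex the walk turns back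
(`W i = W (i + 2)`), and looking two further steps on each side of a deepest vertex gives
`W i = W (i + 4)`.

Conversely, going `lcm k m / m` times around a cycle of length `m ∤ k` gives a closed walk whose
length is a multiple `j ≥ 2` of `k` and in which `W i = W (i + l)` only when `m ∣ l`, so never
for a proper multiple `l` of `k`. For `k = 4` this leaves the `4`-cycle `a b c d`, where the walk
`a b c d c d a b a` does the job.
-/

namespace SimpleGraph

variable {V : Type*} {G : SimpleGraph V}

lemma IsAcyclic.eq_of_adj_of_dist_add_one (hG : G.IsAcyclic) {u a b c : V}
    (hua : G.Reachable u a) (hub : G.Reachable u b) (hac : G.Adj a c) (hbc : G.Adj b c)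
    (ha : G.dist u a + 1 = G.dist u c) (hb : G.dist u b + 1 = G.dist u c) : a = b := by
  obtain ⟨p, hp⟩ := hua.exists_walk_length_eq_dist
  obtain ⟨q, hq⟩ := hub.exists_walk_length_eq_dist
  have hpc : (p.concat hac).IsPath := Walk.isPath_of_length_eq_dist _ (by simp [hp, ha])
  have hqc : (q.concat hbc).IsPath := Walk.isPath_of_length_eq_dist _ (by simp [hq, hb])
  have := congrArg (fun r : G.Path u c => r.1.penultimate)
    ((hG.subsingleton_path u c).elim ⟨_, hpc⟩ ⟨_, hqc⟩)
  simpa [Walk.penultimate_concat] using this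

namespace Walk

variable {u v : V}

noncomputable def depth (W : G.Walk u v) (i : ℕ) : ℕ :=
  G.dist u (W.getVert i)

lemma reachable_getVert (W : G.Walk u v) (i : ℕ) : G.Reachable u (W.getVert i) :=
  (W.take i).reachable

@[simp]
lemma depth_zero (W : G.Walk u v) : W.depth 0 = 0 := by
  simp [depth]

lemma depth_le (W : G.Walk u v) (i : ℕ) : W.depth i ≤ i :=
  (dist_le (W.take i)).trans (by simp)

lemma depth_le_length_sub (W : G.Walk v v) (i : ℕ) : W.depth i ≤ W.length - i := by
  rw [depth, dist_comm]
  exact (dist_le (W.drop i)).trans_eq (W.drop_length i)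

lemma exists_depth_max (W : G.Walk u v) :
    ∃ t ≤ W.length, ∀ i ≤ W.length, W.depth i ≤ W.depth t := by
  obtain ⟨t, ht, hmax⟩ :=
    Finset.exists_max_image (Finset.range (W.length + 1)) W.depth ⟨0, by simp⟩
  exact ⟨t, by simpa [Nat.lt_succ_iff] using ht,
    fun i hi => hmax i (by simpa [Nat.lt_succ_iff] using hi)⟩

end Walk

namespace IsAcyclic

variable {u v : V}

lemma depth_succ (hG : G.IsAcyclic) (W : G.Walk u v) {i j : ℕ} (hij : i + 1 = j)
    (hj : j ≤ W.length) : W.depth i = W.depth j + 1 ∨ W.depth j = W.depth i + 1 := by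
  subst hij
  exact hG.dist_eq_dist_add_one_of_adj_of_reachable u (W.adj_getVert_succ hj)
    (W.reachable_getVert i)

lemma getVert_eq_of_adj_of_depth_add_one (hG : G.IsAcyclic) (W : G.Walk u v) {a b c : ℕ}
    (hac : G.Adj (W.getVert a) (W.getVert c)) (hbc : G.Adj (W.getVert b) (W.getVert c))
    (ha : W.depth a + 1 = W.depth c) (hb : W.depth b + 1 = W.depth c) :
    W.getVert a = W.getVert b :=
  hG.eq_of_adj_of_dist_add_one (W.reachable_getVert a) (W.reachable_getVert b) hac hbc ha hb

lemma getVert_eq_of_depth_peak (hG : G.IsAcyclic) (W : G.Walk u v) {i j k : ℕ}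
    (hij : i + 1 = j) (hjk : j + 1 = k) (hk : k ≤ W.length)
    (hup : W.depth i + 1 = W.depth j) (hdown : W.depth k + 1 = W.depth j) :
    W.getVert i = W.getVert k := by
  subst hij hjk
  exact hG.getVert_eq_of_adj_of_depth_add_one W (W.adj_getVert_succ (by omega))
    (W.adj_getVert_succ (by omega)).symm hup hdown

lemma exists_getVert_eq_getVert_add_two (hG : G.IsAcyclic) (W : G.Walk v v)
    (hW : 0 < W.length) : ∃ i, i + 2 ≤ W.length ∧ W.getVert i = W.getVert (i + 2) := by
  obtain ⟨t, ht, hmax⟩ := W.exists_depth_max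
  have h0 := W.depth_zero
  have h1 := hG.depth_succ W (zero_add 1) hW
  have := hmax 1 hW
  have := W.depth_le t
  have := W.depth_le_length_sub t
  obtain ⟨s, rfl⟩ : ∃ s, t = s + 1 := ⟨t - 1, by omega⟩
  refine ⟨s, by omega, hG.getVert_eq_of_depth_peak W (j := s + 1) rfl rfl (by omega) ?_ ?_⟩
  · have := hmax s (by omega)
    rcases hG.depth_succ W (i := s) rfl (by omega) with h | h <;> omega
  · have := hmax (s + 2) (by omega)
    rcases hG.depth_succ W (j := s + 2) rfl (by omega) with h | h <;> omega

lemma exists_getVert_eq_getVert_add_four (hG : G.IsAcyclic) (W : G.Walk v v)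
    (hW : 4 ≤ W.length) : ∃ i, i + 4 ≤ W.length ∧ W.getVert i = W.getVert (i + 4) := by
  obtain ⟨t, ht, hmax⟩ := W.exists_depth_max
  have step : ∀ i j, i + 1 = j → j ≤ W.length →
      W.depth i = W.depth j + 1 ∨ W.depth j = W.depth i + 1 := fun _ _ => hG.depth_succ W
  have := W.depth_zero
  have := W.depth_le t
  have := W.depth_le_length_sub t
  have := step 0 1 rfl (by omega)
  have := hmax 1 (by omega)
  by_cases hM : W.depth t = 1
  -- the depth alternates between `0` and `1`, so `W 4` is the base point
  · have := step 1 2 rfl (by omega)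
    have := step 2 3 rfl (by omega)
    have := step 3 4 rfl (by omega)
    have := hmax 2 (by omega)
    have := hmax 3 (by omega)
    have := hmax 4 hW
    have h4 : W.depth 4 = 0 := by omega
    exact ⟨0, hW, W.getVert_zero.trans ((W.reachable_getVert 4).dist_eq_zero_iff.mp h4)⟩
  -- `t` is a deepest position and `W (t - 1) = W (t + 1)` its parent; either `t - 2` or `t + 2`
  -- is deepest as well, giving a second peak, or `W (t - 2)` and `W (t + 2)` are both the
  -- grandparent.
  obtain ⟨s, rfl⟩ : ∃ s, t = s + 2 := ⟨t - 2, by omega⟩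
  have := step (s + 1) (s + 2) rfl (by omega)
  have := step (s + 2) (s + 3) rfl (by omega)
  have := hmax (s + 1) (by omega)
  have := hmax (s + 3) (by omega)
  have hmid : W.getVert (s + 1) = W.getVert (s + 3) :=
    hG.getVert_eq_of_depth_peak W (j := s + 2) rfl rfl (by omega) (by omega) (by omega)
  rcases step s (s + 1) rfl (by omega) with hs | hs
  · obtain ⟨r, rfl⟩ : ∃ r, s = r + 1 := ⟨s - 1, by have := W.depth_le s; omega⟩
    have := step r (r + 1) rfl (by omega)
    have := hmax r (by omega)
    exact ⟨r, by omega, (hG.getVert_eq_of_depth_peak W (j := r + 1) rfl rfl (by omega)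
      (by omega) (by omega)).trans hmid⟩
  have := W.depth_le_length_sub (s + 3)
  rcases step (s + 3) (s + 4) rfl (by omega) with he | he
  · refine ⟨s, by omega, hG.getVert_eq_of_adj_of_depth_add_one W (c := s + 1)
      (W.adj_getVert_succ (by omega)) (hmid ▸ (W.adj_getVert_succ (by omega)).symm)
      (by omega) (by omega)⟩
  · have := W.depth_le_length_sub (s + 4)
    have := step (s + 4) (s + 5) rfl (by omega)
    have := hmax (s + 5) (by omega)
    exact ⟨s + 1, by omega,
      hmid.trans (hG.getVert_eq_of_depth_peak W (j := s + 4) (k := s + 5) rfl rfl (by omega)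
        (by omega) (by omega))⟩

end IsAcyclic

lemma isKRepeating_of_exists_getVert_eq {k : ℕ} (hk : 0 < k)
    (h : ∀ (v : V) (W : G.Walk v v), 2 * k ≤ W.length →
      ∃ i, i + k ≤ W.length ∧ W.getVert i = W.getVert (i + k)) :
    IsKRepeating G k := by
  intro v W j hj hW
  obtain ⟨i, hi, heq⟩ := h v W (hW ▸ Nat.mul_le_mul_right k hj)
  exact ⟨i, k, hk, dvd_rfl, by nlinarith, hi, heq⟩

lemma IsAcyclic.isKRepeating_two (hG : G.IsAcyclic) : IsKRepeating G 2 :=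
  isKRepeating_of_exists_getVert_eq two_pos fun _ W hW =>
    hG.exists_getVert_eq_getVert_add_two W (by omega)

lemma IsAcyclic.isKRepeating_four (hG : G.IsAcyclic) : IsKRepeating G 4 :=
  isKRepeating_of_exists_getVert_eq four_pos fun _ W hW =>
    hG.exists_getVert_eq_getVert_add_four W (by omega)

namespace Walk

variable {v : V}

def replicate : ℕ → G.Walk v v → G.Walk v v
  | 0, _ => nil
  | n + 1, c => c.append (replicate n c)

@[simp]
lemma length_replicate (n : ℕ) (c : G.Walk v v) : (replicate n c).length = n * c.length := by
  induction n with
  | zero => simp [replicate]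
  | succ n ih => simp [replicate, ih, add_mul, add_comm]

lemma getVert_replicate (c : G.Walk v v) {n i : ℕ} (hi : i ≤ n * c.length) :
    (replicate n c).getVert i = c.getVert (i % c.length) := by
  induction n generalizing i with
  | zero => simp_all [replicate]
  | succ n ih =>
    rw [replicate, getVert_append]
    split_ifs with h
    · rw [Nat.mod_eq_of_lt h]
    · rw [ih (by rw [add_mul] at hi; omega), ← Nat.mod_eq_sub_mod (by omega)]

lemma IsCycle.dvd_of_getVert_replicate_eq {c : G.Walk v v} (hc : c.IsCycle) {n i l : ℕ}
    (hl : i + l ≤ n * c.length) (h : (replicate n c).getVert i = (replicate n c).getVert (i + l)) :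
    c.length ∣ l := by
  have hpos : 0 < c.length := by have := hc.three_le_length; omega
  rw [getVert_replicate c (by omega), getVert_replicate c hl] at h
  have hmod : i + l ≡ i [MOD c.length] :=
    hc.getVert_injOn'
    (by have := Nat.mod_lt (i + l) hpos; simp only [Set.mem_ofPred_eq]; omega)
    (by have := Nat.mod_lt i hpos; simp only [Set.mem_ofPred_eq]; omega) h.symm
  simpa using (Nat.modEq_iff_dvd' (Nat.le_add_right i l)).mp hmod.symm

end Walk

lemma not_isKRepeating_of_isCycle {v : V} {c : G.Walk v v} (hc : c.IsCycle) {k : ℕ}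
    (hk : ¬ c.length ∣ k) : ¬ IsKRepeating G k := by
  intro hrep
  have hk0 : k ≠ 0 := by rintro rfl; exact hk (dvd_zero _)
  have hc0 : c.length ≠ 0 := by have := hc.three_le_length; omega
  set L := Nat.lcm k c.length
  obtain ⟨j, hj⟩ : k ∣ L := Nat.dvd_lcm_left k c.length
  obtain ⟨r, hr⟩ : c.length ∣ L := Nat.dvd_lcm_right k c.length
  have hL0 : L ≠ 0 := Nat.lcm_ne_zero hk0 hc0
  have hj0 : j ≠ 0 := by rintro rfl; exact hL0 (by simpa using hj)
  have hj1 : j ≠ 1 := by rintro rfl; exact hk ⟨r, by rw [← hr, hj, mul_one]⟩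
  obtain ⟨i, l, hl0, hkl, hlL, hil, heq⟩ :=
    hrep v (Walk.replicate r c) j (by omega) (by rw [Walk.length_replicate]; linarith)
  rw [Walk.length_replicate] at hlL hil
  have hcl := hc.dvd_of_getVert_replicate_eq hil heq
  have := Nat.le_of_dvd hl0 (Nat.lcm_dvd hkl hcl)
  linarith

lemma not_isKRepeating_four_of_adj {a b c d : V} (hab : G.Adj a b) (hbc : G.Adj b c)
    (hcd : G.Adj c d) (hda : G.Adj d a) (hac : a ≠ c) (hbd : b ≠ d) : ¬ IsKRepeating G 4 := by
  intro hrep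
  -- vertices four steps apart on this walk are always opposite corners of the square
  let W : G.Walk a a := .cons hab <| .cons hbc <| .cons hcd <| .cons hcd.symm <| .cons hcd <|
    .cons hda <| .cons hab <| .cons hab.symm .nil
  obtain ⟨i, l, hl0, hkl, hl8, hil, heq⟩ := hrep a W 2 le_rfl rfl
  change l < 8 at hl8
  obtain rfl : l = 4 := by omega
  have hi : i ≤ 4 := by change i + 4 ≤ 8 at hil; omega
  interval_cases i
  · exact hac heq
  · exact hbd heq
  · exact hac heq.symm
  · exact hbd heq.symm
  · exact hac heq.symm

lemma isAcyclic_of_isKRepeating_two (h : IsKRepeating G 2) : G.IsAcyclic := fun _ c hc =>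
  not_isKRepeating_of_isCycle hc
    (fun hdvd => by have := Nat.le_of_dvd two_pos hdvd; have := hc.three_le_length; omega) h

lemma isAcyclic_of_isKRepeating_four (h : IsKRepeating G 4) : G.IsAcyclic := by
  intro v c hc
  have h3 := hc.three_le_length
  by_cases h4 : c.length = 4
  · have hend : c.getVert 4 = c.getVert 0 := by rw [← h4, c.getVert_length, c.getVert_zero]
    have hopp : ∀ i ≤ 1, c.getVert i ≠ c.getVert (i + 2) := fun i hi heq => by
      have := hc.getVert_injOn' (by simp only [Set.mem_ofPred_eq]; omega)
        (by simp only [Set.mem_ofPred_eq]; omega) heq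
      omega
    exact not_isKRepeating_four_of_adj (c.adj_getVert_succ (i := 0) (by omega))
      (c.adj_getVert_succ (i := 1) (by omega)) (c.adj_getVert_succ (i := 2) (by omega))
      (hend ▸ c.adj_getVert_succ (i := 3) (by omega)) (hopp 0 zero_le_one) (hopp 1 le_rfl) h
  · refine not_isKRepeating_of_isCycle hc (fun hdvd => ?_) h
    have h3 : c.length = 3 := by have := Nat.le_of_dvd four_pos hdvd; omega
    rw [h3] at hdvd
    norm_num at hdvd

end SimpleGraph

/-- a graph is a forest (acyclic) iff it is `2`-repeating, iff it is
`4`-repeating. -/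
theorem forest_iff_two_repeating_iff_four_repeating {V : Type*} (G : SimpleGraph V) :
    (G.IsAcyclic ↔ IsKRepeating G 2) ∧ (G.IsAcyclic ↔ IsKRepeating G 4) :=
  ⟨⟨IsAcyclic.isKRepeating_two, isAcyclic_of_isKRepeating_two⟩,
    ⟨IsAcyclic.isKRepeating_four, isAcyclic_of_isKRepeating_four⟩⟩
end

section
/- The tree T* consisting of a path on five vertices together with a path of length two attached to the centre vertex is not 6-repeating: there is a closed walk of length 12 on T* with no proper closed subwalk of length a positive multiple of 6. -/
/-!
Take the walk `0 1 2 3 4 3 2 5 6 5 2 1 0`, which runs out to the leaf `4` and back, then out to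
the leaf `6` and back. The only positive multiple of `6` below `12` is `6`, and the pairs of
vertices six steps apart are `(0,2), (1,5), (2,6), (3,5), (4,2), (5,1), (6,0)`: never equal.
-/

open SimpleGraph

/-- The tree `T*`: a path on five vertices `0-1-2-3-4` with a path `2-5-6` of length two
attached to the centre vertex `2`. -/
def Tstar : SimpleGraph (Fin 7) :=
  SimpleGraph.fromEdgeSet {s(0, 1), s(1, 2), s(2, 3), s(3, 4), s(2, 5), s(5, 6)}

theorem not_isKRepeating_of_walk {V : Type*} {G : SimpleGraph V} {k j : ℕ} {v : V}
    (W : G.Walk v v) (hj : 2 ≤ j) (hW : W.length = j * k)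
    (hW_free : ∀ i l : ℕ, 0 < l → k ∣ l → l < W.length → i + l ≤ W.length →
      W.getVert i ≠ W.getVert (i + l)) :
    ¬ IsKRepeating G k := fun hG ↦ by
  obtain ⟨i, l, hl, hkl, hlW, hilW, hcycle⟩ := hG v W j hj hW
  exact hW_free i l hl hkl hlW hilW hcycle

def Wstar : Tstar.Walk 0 0 :=
  .cons (by simp [Tstar] : Tstar.Adj 0 1) <| .cons (by simp [Tstar] : Tstar.Adj 1 2) <|
  .cons (by simp [Tstar] : Tstar.Adj 2 3) <| .cons (by simp [Tstar] : Tstar.Adj 3 4) <|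
  .cons (by simp [Tstar] : Tstar.Adj 4 3) <| .cons (by simp [Tstar] : Tstar.Adj 3 2) <|
  .cons (by simp [Tstar] : Tstar.Adj 2 5) <| .cons (by simp [Tstar] : Tstar.Adj 5 6) <|
  .cons (by simp [Tstar] : Tstar.Adj 6 5) <| .cons (by simp [Tstar] : Tstar.Adj 5 2) <|
  .cons (by simp [Tstar] : Tstar.Adj 2 1) <| .cons (by simp [Tstar] : Tstar.Adj 1 0) .nil

theorem Wstar_length : Wstar.length = 12 := rfl

theorem Wstar_getVert_ne_getVert_add_six {i : ℕ} (hi : i ≤ 6) :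
    Wstar.getVert i ≠ Wstar.getVert (i + 6) := by
  interval_cases i <;> decide

theorem Wstar_no_closed_subwalk (i l : ℕ) (hl : 0 < l) (h6l : 6 ∣ l) (hl12 : l < 12)
    (hil : i + l ≤ 12) : Wstar.getVert i ≠ Wstar.getVert (i + l) := by
  obtain rfl : l = 6 := by omega
  exact Wstar_getVert_ne_getVert_add_six (by omega)

/-- `T*` is not `6`-repeating; indeed there is a closed walk of length `12`
on `T*` with no proper closed subwalk of length a positive multiple of `6`. -/
theorem Tstar_not_six_repeating :
    ¬ IsKRepeating Tstar 6 ∧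
    ∃ (v : Fin 7) (W : Tstar.Walk v v), W.length = 12 ∧
      ∀ i l : ℕ, 0 < l → 6 ∣ l → l < 12 → i + l ≤ 12 →
        W.getVert i ≠ W.getVert (i + l) := by
  refine ⟨not_isKRepeating_of_walk Wstar le_rfl Wstar_length ?_,
    0, Wstar, Wstar_length, Wstar_no_closed_subwalk⟩
  rw [Wstar_length]
  exact Wstar_no_closed_subwalk
end

section
/- A forest is a caterpillar forest if and only if it contains no subgraph isomorphic to the tree T* (a path on five vertices with a path of length two attached to its centre vertex). -/
open SimpleGraph

/-- `H` is a path graph: its vertices can be listed without repetition so that adjacency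
holds exactly between consecutive members of the list. -/
def IsPathGraph {W : Type*} (H : SimpleGraph W) : Prop :=
  ∃ l : List W, l.Nodup ∧ (∀ w, w ∈ l) ∧
    ∀ a b, H.Adj a b ↔ ∃ i : ℕ, i + 1 < l.length ∧
      ((l[i]? = some a ∧ l[i + 1]? = some b) ∨
       (l[i]? = some b ∧ l[i + 1]? = some a))

/-- A caterpillar: a tree which becomes a path upon removing its leaves. -/
def IsCaterpillar {V : Type*} (G : SimpleGraph V) : Prop :=
  G.IsTree ∧ IsPathGraph (G.induce {v : V | 2 ≤ (G.neighborSet v).ncard})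

/-- A caterpillar forest: each connected component is a caterpillar. -/
def IsCaterpillarForest {V : Type*} (G : SimpleGraph V) : Prop :=
  ∀ c : G.ConnectedComponent, IsCaterpillar (G.induce c.supp)

/-!
The spine of a forest is the subgraph induced on its vertices of degree at least two. `T*` is the
spider with three legs of length two at the centre `2`, so a forest contains `T*` exactly when
some spine vertex has three spine neighbours: each of these has a further neighbour, and
acyclicity keeps the seven vertices distinct. The spine of a tree is again a tree, and a finite
tree of maximum degree two is a path graph: a longest path misses no vertex (it could otherwise
be extended or would pass through a vertex of degree three), and, having as many edges as the
tree, it uses all of them.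
-/

namespace SimpleGraph

variable {α β V : Type*} {A : SimpleGraph α} {G : SimpleGraph V}

lemma isContained_iff_exists_injective {B : SimpleGraph β} :
    A ⊑ B ↔ ∃ f : α → β, Function.Injective f ∧ ∀ a b, A.Adj a b → B.Adj (f a) (f b) :=
  ⟨fun ⟨f⟩ => ⟨f, f.injective, fun _ _ => f.toHom.map_adj⟩,
    fun ⟨f, hf, hadj⟩ => ⟨⟨⟨f, hadj _ _⟩, hf⟩⟩⟩

lemma Connected.exists_isContained_toSimpleGraph (hA : A.Connected) (h : A ⊑ G) :
    ∃ c : G.ConnectedComponent, A ⊑ c.toSimpleGraph := by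
  obtain ⟨f⟩ := h
  obtain ⟨a₀⟩ := hA.nonempty
  have hmem (a : α) : f a ∈ (G.connectedComponentMk (f a₀)).supp :=
    ConnectedComponent.sound ((hA.preconnected a₀ a).map f.toHom).symm
  exact ⟨_, ⟨⟨fun a => ⟨f a, hmem a⟩, f.toHom.map_adj⟩,
    fun a b hab => f.injective (congrArg Subtype.val hab)⟩⟩

lemma IsAcyclic.not_adj_of_adj_of_adj (hG : G.IsAcyclic) {a b c : V} (hab : G.Adj a b)
    (hbc : G.Adj b c) : ¬ G.Adj a c := by
  classical
  exact fun hac => hG.cliqueFree le_rfl {a, b, c} (is3Clique_triple_iff.2 ⟨hab, hac, hbc⟩)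

lemma IsAcyclic.commonNeighbors_subsingleton (hG : G.IsAcyclic) {a d : V} (had : a ≠ d) :
    (G.commonNeighbors a d).Subsingleton := by
  intro b hb c hc
  rw [mem_commonNeighbors] at hb hc
  have hpath {x : V} (hax : G.Adj a x) (hdx : G.Adj d x) :
      (Walk.cons hax (Walk.cons hdx.symm .nil)).IsPath := by
    simp [Walk.cons_isPath_iff, had, hax.ne, hdx.ne']
  have := (hG.subsingleton_path a d).elim ⟨_, hpath hb.1 hb.2⟩ ⟨_, hpath hc.1 hc.2⟩
  simpa using congrArg (fun p : G.Path a d => p.1.snd) this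

lemma exists_isPath_forall_length_le [Finite V] [Nonempty V] (G : SimpleGraph V) :
    ∃ (u v : V) (p : G.Walk u v), p.IsPath ∧
      ∀ (u' v' : V) (q : G.Walk u' v'), q.IsPath → q.length ≤ p.length := by
  classical
  have := Fintype.ofFinite V
  obtain ⟨w⟩ := ‹Nonempty V›
  have : Nonempty (Σ u v : V, G.Path u v) := ⟨⟨w, w, Path.nil⟩⟩
  obtain ⟨⟨u, v, p⟩, hp⟩ := Finite.exists_max fun q : Σ u v : V, G.Path u v => q.2.2.1.length
  exact ⟨u, v, p, p.2, fun u' v' q hq => hp ⟨u', v', q, hq⟩⟩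

lemma Connected.exists_isPath_forall_mem_support [Finite V] (hG : G.Connected)
    (hdeg : ∀ v, (G.neighborSet v).ncard ≤ 2) :
    ∃ (u v : V) (p : G.Walk u v), p.IsPath ∧ ∀ w, w ∈ p.support := by
  have := hG.nonempty
  obtain ⟨u, v, p, hp, hmax⟩ := exists_isPath_forall_length_le G
  refine ⟨u, v, p, hp, fun w => by_contra fun hw => ?_⟩
  obtain ⟨⟨⟨m, y⟩, hmy⟩, -, hm, hy⟩ :=
    (hG.preconnected u w).some.exists_boundary_dart {x | x ∈ p.support} p.start_mem_support hw
  obtain ⟨i, rfl, hi⟩ := Walk.mem_support_iff_exists_getVert.1 hm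
  dsimp only at hmy hy
  rcases i.eq_zero_or_pos with rfl | hi₀
  · rw [Walk.getVert_zero] at hmy
    simpa using hmax _ _ _ (hp.cons hy (h := hmy.symm))
  rcases hi.eq_or_lt with rfl | hlt
  · rw [Walk.getVert_length] at hmy
    simpa using hmax _ _ _ (hp.concat hy hmy)
  have hsub : insert y (p.toSubgraph.neighborSet (p.getVert i)) ⊆ G.neighborSet (p.getVert i) :=
    Set.insert_subset hmy (p.toSubgraph.neighborSet_subset _)
  have hy' : y ∉ p.toSubgraph.neighborSet (p.getVert i) :=
    fun h => hy (Walk.mem_support_of_adj_toSubgraph h.symm)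
  have := Set.ncard_le_ncard hsub
  rw [Set.ncard_insert_of_notMem hy', hp.ncard_neighborSet_toSubgraph_internal_eq_two hi₀.ne' hlt]
    at this
  linarith [hdeg (p.getVert i)]

lemma IsTree.mem_edges_of_forall_mem_support [Finite V] (hT : G.IsTree) {u v : V}
    {p : G.Walk u v} (hp : p.IsPath) (hsupp : ∀ w, w ∈ p.support) {e : Sym2 V}
    (he : e ∈ G.edgeSet) : e ∈ p.edges := by
  classical
  have := Fintype.ofFinite V
  have hcard : p.length + 1 = Fintype.card V := by
    rw [← p.length_support, ← List.toFinset_card_of_nodup hp.support_nodup, ← Finset.card_univ]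
    congr
    exact Finset.eq_univ_of_forall fun w => List.mem_toFinset.2 (hsupp w)
  have hsub : p.edges.toFinset ⊆ G.edgeFinset := fun e he =>
    mem_edgeFinset.2 (p.edges_subset_edgeSet (List.mem_toFinset.1 he))
  have heq : p.edges.toFinset = G.edgeFinset := by
    refine Finset.eq_of_subset_of_card_le hsub ?_
    rw [List.toFinset_card_of_nodup hp.isTrail.edges_nodup, p.length_edges]
    have := hT.card_edgeFinset
    omega
  rw [← List.mem_toFinset, heq]
  exact mem_edgeFinset.2 he

def spine (G : SimpleGraph V) : Set V := {v | 2 ≤ (G.neighborSet v).ncard}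

lemma mem_spine_of_adj [Finite V] {v a b : V} (ha : G.Adj v a) (hb : G.Adj v b) (hab : a ≠ b) :
    v ∈ G.spine :=
  (Set.one_lt_ncard_iff (Set.toFinite _)).2 ⟨a, b, ha, hb, hab⟩

end SimpleGraph

open SimpleGraph

lemma IsPathGraph.ncard_neighborSet_le_two {W : Type*} {H : SimpleGraph W} (hH : IsPathGraph H)
    (w : W) : (H.neighborSet w).ncard ≤ 2 := by
  classical
  obtain ⟨l, hnd, hmem, hadj⟩ := hH
  obtain ⟨j, hj, rfl⟩ := List.getElem_of_mem (hmem w)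
  have hidx {i : ℕ} (hi : l[i]? = some l[j]) : i = j :=
    (List.getElem?_inj (List.getElem?_eq_some_iff.1 hi).1 hnd).1 (hi.trans (by simp))
  have hsub : H.neighborSet l[j] ⊆ ↑(l[j + 1]?.toFinset ∪ l[j - 1]?.toFinset) := by
    intro y hy
    simp only [Finset.coe_union, Set.mem_union, Finset.mem_coe, Option.mem_toFinset,
      Option.mem_def]
    obtain ⟨i, -, ⟨hi, hi'⟩ | ⟨hi, hi'⟩⟩ := (hadj _ _).1 hy
    · exact Or.inl (hidx hi ▸ hi')
    · exact Or.inr (by rw [← hidx hi']; simpa using hi)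
  calc (H.neighborSet l[j]).ncard
      ≤ (l[j + 1]?.toFinset ∪ l[j - 1]?.toFinset).card := by
        rw [← Set.ncard_coe_finset]; exact Set.ncard_le_ncard hsub
    _ ≤ 1 + 1 := (Finset.card_union_le _ _).trans
        (add_le_add (by cases l[j + 1]? <;> simp) (by cases l[j - 1]? <;> simp))

lemma isPathGraph_of_isPath {W : Type*} {H : SimpleGraph W} {u v : W} {p : H.Walk u v}
    (hp : p.IsPath) (hsupp : ∀ w, w ∈ p.support) (hedges : ∀ e ∈ H.edgeSet, e ∈ p.edges) :
    IsPathGraph H := by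
  refine ⟨p.support, hp.support_nodup, hsupp, fun a b => ?_⟩
  rw [← mem_edgeSet,
    show s(a, b) ∈ H.edgeSet ↔ s(a, b) ∈ p.edges from ⟨hedges _, (p.edges_subset_edgeSet ·)⟩,
    Walk.mk_mem_edges_iff_exists]
  refine exists_congr fun i => ?_
  rw [Walk.length_support, Nat.add_lt_add_iff_right]
  refine and_congr_right fun hi => ?_
  rw [← p.getVert_eq_support_getElem? hi.le, ← p.getVert_eq_support_getElem? hi, Sym2.eq_iff]
  simp only [Option.some_inj]

lemma isPathGraph_of_isAcyclic_of_preconnected {W : Type*} [Finite W] {H : SimpleGraph W}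
    (hA : H.IsAcyclic) (hP : H.Preconnected) (hdeg : ∀ w, (H.neighborSet w).ncard ≤ 2) :
    IsPathGraph H := by
  cases isEmpty_or_nonempty W
  · exact ⟨[], List.nodup_nil, isEmptyElim, isEmptyElim⟩
  · have hT : H.IsTree := ⟨⟨hP⟩, hA⟩
    obtain ⟨u, v, p, hp, hsupp⟩ := hT.1.exists_isPath_forall_mem_support hdeg
    exact isPathGraph_of_isPath hp hsupp fun _ => hT.mem_edges_of_forall_mem_support hp hsupp

lemma isContained_tstar_iff {V : Type*} {G : SimpleGraph V} :
    Tstar ⊑ G ↔ ∃ f : Fin 7 → V, Function.Injective f ∧ G.Adj (f 0) (f 1) ∧ G.Adj (f 1) (f 2) ∧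
      G.Adj (f 2) (f 3) ∧ G.Adj (f 3) (f 4) ∧ G.Adj (f 2) (f 5) ∧ G.Adj (f 5) (f 6) := by
  rw [isContained_iff_exists_injective]
  refine exists_congr fun f => and_congr_right fun _ => ⟨fun h => ?_, fun h a b hab => ?_⟩
  · exact ⟨h _ _ (by simp [Tstar]), h _ _ (by simp [Tstar]), h _ _ (by simp [Tstar]),
      h _ _ (by simp [Tstar]), h _ _ (by simp [Tstar]), h _ _ (by simp [Tstar])⟩
  · simp only [Tstar, fromEdgeSet_adj, Set.mem_insert_iff, Set.mem_singleton_iff, Sym2.eq_iff]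
      at hab
    obtain ⟨h01, h12, h23, h34, h25, h56⟩ := h
    rcases hab.1 with (⟨rfl, rfl⟩ | ⟨rfl, rfl⟩) | (⟨rfl, rfl⟩ | ⟨rfl, rfl⟩) |
      (⟨rfl, rfl⟩ | ⟨rfl, rfl⟩) | (⟨rfl, rfl⟩ | ⟨rfl, rfl⟩) | (⟨rfl, rfl⟩ | ⟨rfl, rfl⟩) |
      (⟨rfl, rfl⟩ | ⟨rfl, rfl⟩) <;>
      first | assumption | exact Adj.symm ‹_›

lemma tstar_connected : Tstar.Connected := by
  have adj (a b : Fin 7) (h : s(a, b) = s(0, 1) ∨ s(a, b) = s(1, 2) ∨ s(a, b) = s(2, 3) ∨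
      s(a, b) = s(3, 4) ∨ s(a, b) = s(2, 5) ∨ s(a, b) = s(5, 6) := by decide)
      (hne : a ≠ b := by decide) : Tstar.Adj a b := by
    simp only [Tstar, fromEdgeSet_adj, Set.mem_insert_iff, Set.mem_singleton_iff]
    exact ⟨h, hne⟩
  refine (connected_iff_exists_forall_reachable _).2 ⟨2, fun w => ?_⟩
  fin_cases w
  · exact (adj 2 1).reachable.trans (adj 1 0).reachable
  · exact (adj 2 1).reachable
  · rfl
  · exact (adj 2 3).reachable
  · exact (adj 2 3).reachable.trans (adj 3 4).reachable
  · exact (adj 2 5).reachable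
  · exact (adj 2 5).reachable.trans (adj 5 6).reachable

namespace SimpleGraph

variable {V : Type*} {G : SimpleGraph V}

lemma exists_two_lt_ncard_neighborSet_spine [Finite V] (h : Tstar ⊑ G) :
    ∃ x : G.spine, 2 < ((G.induce G.spine).neighborSet x).ncard := by
  obtain ⟨f, hf, h01, h12, h23, h34, h25, h56⟩ := isContained_tstar_iff.1 h
  have hne {i j : Fin 7} (hij : i ≠ j) : f i ≠ f j := hf.ne hij
  let s (i : Fin 7) (hi : f i ∈ G.spine) : G.spine := ⟨f i, hi⟩
  have h1 := mem_spine_of_adj h01.symm h12 (hne (by decide : (0 : Fin 7) ≠ 2))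
  have h2 := mem_spine_of_adj h12.symm h23 (hne (by decide : (1 : Fin 7) ≠ 3))
  have h3 := mem_spine_of_adj h23.symm h34 (hne (by decide : (2 : Fin 7) ≠ 4))
  have h5 := mem_spine_of_adj h25.symm h56 (hne (by decide : (2 : Fin 7) ≠ 6))
  refine ⟨s 2 h2, (Set.two_lt_ncard_iff (Set.toFinite _)).2
    ⟨s 1 h1, s 3 h3, s 5 h5, h12.symm, h23, h25, ?_, ?_, ?_⟩⟩ <;>
    exact fun h => hne (by decide) (congrArg Subtype.val h)

lemma IsAcyclic.tstar_isContained_of_two_lt [Finite V] (hG : G.IsAcyclic) {x : G.spine}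
    (hx : 2 < ((G.induce G.spine).neighborSet x).ncard) : Tstar ⊑ G := by
  obtain ⟨⟨a, ha₂⟩, ⟨b, hb₂⟩, ⟨c, hc₂⟩, ha, hb, hc, hab, hac, hbc⟩ :=
    (Set.two_lt_ncard_iff (Set.toFinite _)).1 hx
  simp only [mem_neighborSet, induce_adj, ne_eq, Subtype.mk.injEq] at ha hb hc hab hac hbc
  obtain ⟨a', ha', ha'x⟩ := Set.exists_ne_of_one_lt_ncard ha₂ x.1
  obtain ⟨b', hb', hb'x⟩ := Set.exists_ne_of_one_lt_ncard hb₂ x.1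
  obtain ⟨c', hc', hc'x⟩ := Set.exists_ne_of_one_lt_ncard hc₂ x.1
  have apart {y z y' z' : V} (hy : G.Adj x.1 y) (hy' : G.Adj y y') (hz : G.Adj x.1 z)
      (hz' : G.Adj z z') (hz'x : z' ≠ x.1) (hyz : y ≠ z) : y ≠ z' ∧ y' ≠ z' := by
    refine ⟨?_, fun h => hyz (hG.commonNeighbors_subsingleton hz'x.symm ?_ ?_)⟩
    · rintro rfl
      exact hG.not_adj_of_adj_of_adj hy hz'.symm hz
    · exact ⟨hy, h ▸ hy'.symm⟩
    · exact ⟨hz, hz'.symm⟩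
  obtain ⟨hab', ha'b'⟩ := apart ha ha' hb hb' hb'x hab
  obtain ⟨hac', ha'c'⟩ := apart ha ha' hc hc' hc'x hac
  obtain ⟨hbc', hb'c'⟩ := apart hb hb' hc hc' hc'x hbc
  obtain ⟨hba', -⟩ := apart hb hb' ha ha' ha'x (Ne.symm hab)
  obtain ⟨hca', -⟩ := apart hc hc' ha ha' ha'x (Ne.symm hac)
  obtain ⟨hcb', -⟩ := apart hc hc' hb hb' hb'x (Ne.symm hbc)
  have hxa := ha.ne; have hxb := hb.ne; have hxc := hc.ne
  have haa' := ha'.ne; have hbb' := hb'.ne; have hcc' := hc'.ne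
  refine isContained_tstar_iff.2
    ⟨![a', a, x, b, b', c, c'], ?_, ha'.symm, ha.symm, hb, hb', hc, hc'⟩
  intro i j hij
  fin_cases i <;> fin_cases j <;>
    simp only [Fin.mk_one, Fin.zero_eta, Fin.isValue, Fin.reduceFinMk, Fin.reduceEq,
      Matrix.cons_val, Matrix.cons_val_one, Matrix.cons_val_zero] at hij ⊢ <;>
    first | rfl | exact absurd hij ‹_› | exact absurd hij.symm ‹_›

lemma IsTree.isPathGraph_spine [Finite V] (hT : G.IsTree) (hfree : ¬ Tstar ⊑ G) :
    IsPathGraph (G.induce G.spine) := by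
  refine isPathGraph_of_isAcyclic_of_preconnected (hT.isAcyclic.induce _) ?_ fun x => ?_
  · refine hT.1.preconnected.induce_of_degree_eq_one fun v hv => ?_
    rw [← Set.ncard_le_one_iff_subsingleton]
    exact Nat.le_of_lt_succ (not_le.1 hv)
  · by_contra! hx
    exact hfree (hT.isAcyclic.tstar_isContained_of_two_lt hx)

end SimpleGraph

/-- a forest is a caterpillar forest iff it contains no subgraph isomorphic
to `T*`. -/
theorem caterpillarForest_iff_no_Tstar {V : Type*} [Fintype V] (G : SimpleGraph V)
    (hG : G.IsAcyclic) :
    IsCaterpillarForest G ↔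
      ¬ ∃ f : Fin 7 → V, Function.Injective f ∧
          ∀ a b : Fin 7, Tstar.Adj a b → G.Adj (f a) (f b) := by
  rw [← isContained_iff_exists_injective]
  constructor
  · intro hcat hT
    obtain ⟨c, hc⟩ := tstar_connected.exists_isContained_toSimpleGraph hT
    obtain ⟨x, hx⟩ := exists_two_lt_ncard_neighborSet_spine hc
    exact hx.not_ge ((hcat c).2.ncard_neighborSet_le_two x)
  · intro hfree c
    have hT := hG.isTree_connectedComponent c
    exact ⟨hT, hT.isPathGraph_spine fun h => hfree (h.trans (Copy.induce G c.supp).isContained)⟩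
end

section
/- For a real n×m matrix A, the set Q'(A) = {DAE : D, E positive diagonal matrices} equals the full qualitative class Q(A) if and only if the bipartite graph Γ_A of A is a forest. -/
/-!
Write `B ∈ Q(A)` as `B = P ∘ A` with `P` positive. Then `B = DAE` means
`log P i j = log D i + log E j` on the support of `A`, i.e. the edge function `log P` on `Γ_A`,
oriented from rows to columns, is the coboundary `φ x - φ y` of a potential on the vertices.
On a forest every antisymmetric edge function is a coboundary: an edge is a bridge, so a potential
for the graph without it can be shifted by a constant on one side. If `Γ_A` has a cycle, some edge
is not a bridge; a potential for the edge function supported on that edge alone would be constant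
along a path avoiding it, which is impossible. The corresponding matrix in `Q(A)` outside `Q'(A)`
is `A` with one nonzero entry multiplied by `e`.
-/

open Matrix

/-- The qualitative class of a real matrix: matrices with the same sign pattern. -/
def Qual {n m : ℕ} (A : Matrix (Fin n) (Fin m) ℝ) : Set (Matrix (Fin n) (Fin m) ℝ) :=
  {B | ∀ i j, Real.sign (B i j) = Real.sign (A i j)}

/-- The bipartite graph `Γ_A` of a matrix `A`: row-vertices and column-vertices, with an edge
between row `i` and column `j` iff `A i j ≠ 0`. -/
def bipartiteGraph {n m : ℕ} (A : Matrix (Fin n) (Fin m) ℝ) : SimpleGraph (Fin n ⊕ Fin m) :=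
  SimpleGraph.fromRel (fun x y => ∃ i j, x = Sum.inl i ∧ y = Sum.inr j ∧ A i j ≠ 0)

namespace SimpleGraph

variable {V α : Type*} [AddCommGroup α] {G : SimpleGraph V}

def HasPotential (G : SimpleGraph V) (c : V → V → α) : Prop :=
  ∃ φ : V → α, ∀ ⦃x y⦄, G.Adj x y → φ x - φ y = c x y

lemma Reachable.eq_of_forall_adj_eq {β : Type*} {f : V → β}
    (hf : ∀ ⦃x y⦄, G.Adj x y → f x = f y) {x y : V} (h : G.Reachable x y) : f x = f y := by
  obtain ⟨p⟩ := h
  induction p with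
  | nil => rfl
  | cons hxy _ ih => exact (hf hxy).trans ih

lemma HasPotential.of_deleteEdges_of_isBridge {c : V → V → α} (hc : ∀ x y, c y x = -c x y)
    {a b : V} (hbridge : G.IsBridge s(a, b))
    (h : (G.deleteEdges {s(a, b)}).HasPotential c) : G.HasPotential c := by
  classical
  obtain ⟨φ, hφ⟩ := h
  set H := G.deleteEdges {s(a, b)}
  have hb : ¬H.Reachable a b := isBridge_iff.1 hbridge
  -- shift `φ` by a constant on the side of the bridge containing `a`
  let t := c a b - (φ a - φ b)
  refine ⟨fun v => if H.Reachable a v then φ v + t else φ v, fun x y hxy => ?_⟩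
  by_cases he : s(x, y) = s(a, b)
  · rcases Sym2.eq_iff.1 he with ⟨rfl, rfl⟩ | ⟨rfl, rfl⟩
    · simp only [hb, t, if_true, if_false, Reachable.rfl]
      abel
    · simp only [hb, t, hc x y, if_true, if_false, Reachable.rfl]
      abel
  · have hH : H.Adj x y := by simp [H, hxy, he]
    have hxy_iff : H.Reachable a x ↔ H.Reachable a y :=
      ⟨fun h => h.trans hH.reachable, fun h => h.trans hH.symm.reachable⟩
    by_cases hx : H.Reachable a x
    · simp [hx, hxy_iff.1 hx, ← hφ hH]
    · simp [hx, mt hxy_iff.2 hx, hφ hH]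

theorem IsAcyclic.hasPotential [Finite V] (hG : G.IsAcyclic) {c : V → V → α}
    (hc : ∀ x y, c y x = -c x y) : G.HasPotential c := by
  induction G using WellFoundedLT.induction with
  | _ G ih =>
    by_cases hE : ∃ a b, G.Adj a b
    · obtain ⟨a, b, hab⟩ := hE
      have hlt : G.deleteEdges {s(a, b)} < G :=
        (deleteEdges_le _).lt_of_ne (ne_of_apply_ne (·.Adj a b) (by simp [hab]))
      exact (ih _ hlt (hG.anti (deleteEdges_le _))).of_deleteEdges_of_isBridge hc
        (isAcyclic_iff_forall_adj_isBridge.1 hG hab)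
    · simp only [not_exists] at hE
      exact ⟨0, fun x y hxy => (hE x y hxy).elim⟩

lemma not_hasPotential_of_not_isBridge {c : V → V → α} {a b : V} (hab : G.Adj a b)
    (hbridge : ¬G.IsBridge s(a, b)) (hcab : c a b ≠ 0)
    (hc : ∀ ⦃x y⦄, G.Adj x y → s(x, y) ≠ s(a, b) → c x y = 0) : ¬G.HasPotential c := by
  rintro ⟨φ, hφ⟩
  have hφab : φ a = φ b := (not_not.1 (isBridge_iff.not.1 hbridge)).eq_of_forall_adj_eq
    fun x y hxy => by
      rw [deleteEdges_adj] at hxy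
      exact sub_eq_zero.1 ((hφ hxy.1).trans (hc hxy.1 (by simpa using hxy.2)))
  exact hcab (by rw [← hφ hab, hφab, sub_self])

end SimpleGraph

section Bipartite

variable {ι κ α : Type*} [AddCommGroup α]

def bipartiteCochain (L : Matrix ι κ α) : ι ⊕ κ → ι ⊕ κ → α
  | .inl i, .inr j => L i j
  | .inr j, .inl i => -L i j
  | _, _ => 0

lemma bipartiteCochain_swap (L : Matrix ι κ α) (x y : ι ⊕ κ) :
    bipartiteCochain L y x = -bipartiteCochain L x y := by
  rcases x with i | j <;> rcases y with i' | j' <;> simp [bipartiteCochain]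

end Bipartite

lemma Real.sign_mul_of_pos {c x : ℝ} (hc : 0 < c) : Real.sign (c * x) = Real.sign x := by
  rcases lt_trichotomy x 0 with hx | rfl | hx
  · rw [Real.sign_of_neg hx, Real.sign_of_neg (mul_neg_of_pos_of_neg hc hx)]
  · simp
  · rw [Real.sign_of_pos hx, Real.sign_of_pos (mul_pos hc hx)]

lemma div_pos_of_sign_eq {a b : ℝ} (ha : a ≠ 0) (h : Real.sign b = Real.sign a) : 0 < b / a := by
  rcases ha.lt_or_gt with ha | ha <;> rcases lt_trichotomy b 0 with hb | rfl | hb <;>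
    simp_all [Real.sign_of_neg, Real.sign_of_pos, div_pos_of_neg_of_neg] <;> linarith

section QualitativeClass

variable {n m : ℕ}

@[simp]
lemma bipartiteGraph_adj_inl_inr (A : Matrix (Fin n) (Fin m) ℝ) (i : Fin n) (j : Fin m) :
    (bipartiteGraph A).Adj (.inl i) (.inr j) ↔ A i j ≠ 0 := by
  simp [bipartiteGraph]

@[simp]
lemma bipartiteGraph_adj_inr_inl (A : Matrix (Fin n) (Fin m) ℝ) (i : Fin n) (j : Fin m) :
    (bipartiteGraph A).Adj (.inr j) (.inl i) ↔ A i j ≠ 0 := by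
  simp [bipartiteGraph]

@[simp]
lemma not_bipartiteGraph_adj_inl_inl (A : Matrix (Fin n) (Fin m) ℝ) (i i' : Fin n) :
    ¬(bipartiteGraph A).Adj (.inl i) (.inl i') := by
  simp [bipartiteGraph]

@[simp]
lemma not_bipartiteGraph_adj_inr_inr (A : Matrix (Fin n) (Fin m) ℝ) (j j' : Fin m) :
    ¬(bipartiteGraph A).Adj (.inr j) (.inr j') := by
  simp [bipartiteGraph]

def QualPrime (A : Matrix (Fin n) (Fin m) ℝ) : Set (Matrix (Fin n) (Fin m) ℝ) :=
  {B | ∃ (D : Fin n → ℝ) (E : Fin m → ℝ), (∀ i, 0 < D i) ∧ (∀ j, 0 < E j) ∧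
    B = diagonal D * A * diagonal E}

lemma mem_qualPrime_iff {A B : Matrix (Fin n) (Fin m) ℝ} :
    B ∈ QualPrime A ↔ ∃ (D : Fin n → ℝ) (E : Fin m → ℝ), (∀ i, 0 < D i) ∧ (∀ j, 0 < E j) ∧
      ∀ i j, B i j = D i * E j * A i j := by
  simp only [QualPrime, Set.mem_ofPred_eq, ← Matrix.ext_iff, mul_diagonal, diagonal_mul,
    mul_right_comm _ (A _ _)]

lemma qualPrime_subset_qual (A : Matrix (Fin n) (Fin m) ℝ) : QualPrime A ⊆ Qual A := by
  intro B hB i j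
  obtain ⟨D, E, hD, hE, hB⟩ := mem_qualPrime_iff.1 hB
  rw [hB i j, Real.sign_mul_of_pos (mul_pos (hD i) (hE j))]

theorem qual_subset_qualPrime_iff (A : Matrix (Fin n) (Fin m) ℝ) :
    Qual A ⊆ QualPrime A ↔
      ∀ L : Matrix (Fin n) (Fin m) ℝ, ∃ (u : Fin n → ℝ) (v : Fin m → ℝ),
        ∀ i j, A i j ≠ 0 → u i - v j = L i j := by
  refine ⟨fun h L => ?_, fun h B hB => ?_⟩
  · have hB : Matrix.of (fun i j => Real.exp (L i j) * A i j) ∈ Qual A := fun i j =>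
      Real.sign_mul_of_pos (Real.exp_pos _)
    obtain ⟨D, E, hD, hE, hDE⟩ := mem_qualPrime_iff.1 (h hB)
    refine ⟨fun i => Real.log (D i), fun j => -Real.log (E j), fun i j hA => ?_⟩
    have : Real.exp (L i j) = D i * E j := mul_right_cancel₀ hA (hDE i j)
    rw [sub_neg_eq_add, ← Real.log_mul (hD i).ne' (hE j).ne', ← this, Real.log_exp]
  · obtain ⟨u, v, huv⟩ := h (fun i j => Real.log (B i j / A i j))
    refine mem_qualPrime_iff.2 ⟨fun i => Real.exp (u i), fun j => Real.exp (-v j),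
      fun i => Real.exp_pos _, fun j => Real.exp_pos _, fun i j => ?_⟩
    by_cases hA : A i j = 0
    · rw [hA, mul_zero, ← Real.sign_eq_zero_iff, hB i j, hA, Real.sign_zero]
    · rw [← Real.exp_add, ← sub_eq_add_neg, huv i j hA,
        Real.exp_log (div_pos_of_sign_eq hA (hB i j)), div_mul_cancel₀ _ hA]

lemma hasPotential_bipartiteCochain_iff (A : Matrix (Fin n) (Fin m) ℝ)
    (L : Matrix (Fin n) (Fin m) ℝ) :
    (bipartiteGraph A).HasPotential (bipartiteCochain L) ↔
      ∃ (u : Fin n → ℝ) (v : Fin m → ℝ), ∀ i j, A i j ≠ 0 → u i - v j = L i j := by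
  refine ⟨fun ⟨φ, hφ⟩ => ⟨φ ∘ .inl, φ ∘ .inr, fun i j hA => ?_⟩, fun ⟨u, v, huv⟩ => ?_⟩
  · exact hφ ((bipartiteGraph_adj_inl_inr A i j).2 hA)
  · refine ⟨Sum.elim u v, ?_⟩
    rintro (i | j) (i' | j') hadj <;>
      simp only [bipartiteGraph_adj_inl_inr, bipartiteGraph_adj_inr_inl,
        not_bipartiteGraph_adj_inl_inl, not_bipartiteGraph_adj_inr_inr] at hadj
    · exact huv i j' hadj
    · simp [bipartiteCochain, ← huv i' j hadj]

theorem bipartiteGraph_isAcyclic_iff (A : Matrix (Fin n) (Fin m) ℝ) :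
    (bipartiteGraph A).IsAcyclic ↔
      ∀ L : Matrix (Fin n) (Fin m) ℝ, (bipartiteGraph A).HasPotential (bipartiteCochain L) := by
  refine ⟨fun h L => h.hasPotential (bipartiteCochain_swap L), fun h => ?_⟩
  suffices hbridge : ∀ i j, A i j ≠ 0 → (bipartiteGraph A).IsBridge s(.inl i, .inr j) by
    rw [SimpleGraph.isAcyclic_iff_forall_adj_isBridge]
    rintro (i | j) (i' | j') hadj <;>
      simp only [bipartiteGraph_adj_inl_inr, bipartiteGraph_adj_inr_inl,
        not_bipartiteGraph_adj_inl_inl, not_bipartiteGraph_adj_inr_inr] at hadj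
    · exact hbridge i j' hadj
    · exact Sym2.eq_swap ▸ hbridge i' j hadj
  intro i j hA
  by_contra hbridge
  refine SimpleGraph.not_hasPotential_of_not_isBridge ((bipartiteGraph_adj_inl_inr A i j).2 hA)
    hbridge (c := bipartiteCochain (single i j 1)) (by simp [bipartiteCochain]) ?_ (h _)
  rintro (i' | j') (i'' | j'') hadj hne <;>
    simp only [bipartiteGraph_adj_inl_inr, bipartiteGraph_adj_inr_inl,
      not_bipartiteGraph_adj_inl_inl, not_bipartiteGraph_adj_inr_inr] at hadj <;>
    simp only [bipartiteCochain, single_apply, neg_eq_zero, ite_eq_right_iff] <;>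
    rintro ⟨rfl, rfl⟩
  · exact (hne rfl).elim
  · exact (hne Sym2.eq_swap).elim

end QualitativeClass

/-- `Q'(A) = {D A E : D, E positive diagonal}` equals the qualitative class
`Q(A)` iff the bipartite graph `Γ_A` is a forest. -/
theorem qualPrime_eq_qual_iff_forest {n m : ℕ} (A : Matrix (Fin n) (Fin m) ℝ) :
    {B : Matrix (Fin n) (Fin m) ℝ |
        ∃ (D : Fin n → ℝ) (E : Fin m → ℝ), (∀ i, 0 < D i) ∧ (∀ j, 0 < E j) ∧
          B = Matrix.diagonal D * A * Matrix.diagonal E} = Qual A ↔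
      (bipartiteGraph A).IsAcyclic := by
  change QualPrime A = Qual A ↔ _
  calc QualPrime A = Qual A ↔ Qual A ⊆ QualPrime A :=
        ⟨fun h => h.ge, (qualPrime_subset_qual A).antisymm⟩
    _ ↔ ∀ L : Matrix (Fin n) (Fin m) ℝ, (bipartiteGraph A).HasPotential (bipartiteCochain L) := by
        simp only [qual_subset_qualPrime_iff, hasPotential_bipartiteCochain_iff]
    _ ↔ (bipartiteGraph A).IsAcyclic := (bipartiteGraph_isAcyclic_iff A).symm
end

section
/- If A is a real n×n matrix all of whose principal minors are nonnegative, then no eigenvalue λ of A satisfies λ = ρe^{iθ} with ρ > 0 and |θ − π| < π/n; consequently, if A^k is a P_0-matrix then no eigenvalue λ of A satisfies λ^k ∈ F(n), where F(n) = {ρe^{iθ} : ρ > 0, |θ − π| < π/n}. -/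
/-!
If `z` is an eigenvalue of the `P₀`-matrix `A`, then `-z` is a root of `det (X + A)`, whose
coefficient of `X ^ (n - k)` is the sum of the `k × k` principal minors of `A`: a nonzero real
polynomial of degree at most `n` with nonnegative coefficients. Such a polynomial has no root
`μ = r e^{iθ} ≠ 0` with `n |θ| < π`, because after rotating by `e^{-inθ/2}` each term
`cⱼ rʲ e^{i(j - n/2)θ}` has nonnegative real part and the leading one positive real part.
The statement for `A ^ k` follows since `z ^ k` is an eigenvalue of `A ^ k`.
-/

open Matrix

/-- A real square matrix is a `P₀`-matrix if all its principal minors are nonnegative. -/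
def IsP0 {n : ℕ} (M : Matrix (Fin n) (Fin n) ℝ) : Prop :=
  ∀ α : Finset (Fin n), α.Nonempty →
    0 ≤ (M.submatrix (fun i : α => (i : Fin n)) (fun j : α => (j : Fin n))).det

/-- The open sector `F(n) = {ρ e^{iθ} : ρ > 0, |θ - π| < π/n}` around the negative real
axis (for `z ≠ 0`, the condition `|θ - π| < π/n` is `|arg(-z)| < π/n`). -/
def Fsector (n : ℕ) : Set ℂ :=
  {z | z ≠ 0 ∧ |Complex.arg (-z)| < Real.pi / n}

open Polynomial Complex Real

lemma Complex.re_exp_neg_mul_I_mul_pow (μ : ℂ) (φ : ℝ) (i : ℕ) :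
    (exp (-φ * I) * μ ^ i).re = ‖μ‖ ^ i * Real.cos (i * arg μ - φ) := by
  conv_lhs => rw [← norm_mul_exp_arg_mul_I μ, mul_pow, ← exp_nat_mul, mul_left_comm,
    ← exp_add]
  rw [← ofReal_pow, re_ofReal_mul, ← exp_ofReal_mul_I_re]
  congr 3
  push_cast
  ring

lemma Real.cos_pos_of_abs_sub_half_le {n : ℕ} {x θ : ℝ} (hx : |x - n / 2| ≤ n / 2)
    (hθ : n * |θ| < π) : 0 < Real.cos (x * θ - n * θ / 2) := by
  refine Real.cos_pos_of_mem_Ioo (abs_lt.1 ?_)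
  calc |x * θ - n * θ / 2| = |x - n / 2| * |θ| := by rw [← abs_mul]; ring_nf
    _ ≤ n / 2 * |θ| := by gcongr
    _ < π / 2 := by linarith

theorem Polynomial.aeval_ne_zero_of_coeff_nonneg {p : ℝ[X]} (hp : p ≠ 0)
    (hcoeff : ∀ i, 0 ≤ p.coeff i) {n : ℕ} (hdeg : p.natDegree ≤ n) {μ : ℂ} (hμ : μ ≠ 0)
    (harg : n * |arg μ| < π) : aeval μ p ≠ 0 := by
  set φ : ℝ := n * arg μ / 2
  have hcos : ∀ i ∈ Finset.range (n + 1), 0 < Real.cos (i * arg μ - φ) := fun i hi =>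
    Real.cos_pos_of_abs_sub_half_le (abs_le.2 ⟨by linarith [i.cast_nonneg (α := ℝ)],
      by linarith [show (i : ℝ) ≤ n by exact_mod_cast Finset.mem_range_succ_iff.1 hi]⟩) harg
  have hre : (exp (-φ * I) * aeval μ p).re =
      ∑ i ∈ Finset.range (n + 1), p.coeff i * (‖μ‖ ^ i * Real.cos (i * arg μ - φ)) := by
    rw [aeval_eq_sum_range' (Nat.lt_succ_of_le hdeg), Finset.mul_sum, re_sum]
    refine Finset.sum_congr rfl fun i _ => ?_
    rw [Algebra.smul_def, mul_left_comm, coe_algebraMap, re_ofReal_mul,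
      re_exp_neg_mul_I_mul_pow]
  have hpos : 0 < (exp (-φ * I) * aeval μ p).re := by
    rw [hre]
    refine Finset.sum_pos' (fun i hi => mul_nonneg (hcoeff i) (by positivity [hcos i hi]))
      ⟨p.natDegree, Finset.mem_range_succ_iff.2 hdeg, ?_⟩
    exact mul_pos ((hcoeff _).lt_of_ne (leadingCoeff_ne_zero.2 hp).symm)
      (mul_pos (pow_pos (norm_pos_iff.2 hμ) _) (hcos _ (Finset.mem_range_succ_iff.2 hdeg)))
  intro h
  simp [h] at hpos

theorem Matrix.mem_spectrum_map_iff_isRoot {m K L : Type*} [Fintype m] [DecidableEq m] [Field K]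
    [Field L] (f : K →+* L) (A : Matrix m m K) (z : L) :
    z ∈ spectrum L (A.map f) ↔ (A.charpoly.map f).IsRoot z := by
  rw [mem_spectrum_iff_isRoot_charpoly, charpoly_map]

namespace IsP0

variable {n : ℕ} {A : Matrix (Fin n) (Fin n) ℝ}

lemma det_submatrix_nonneg (hA : IsP0 A) (s : Finset (Fin n)) :
    0 ≤ (A.submatrix (Subtype.val : s → Fin n) Subtype.val).det := by
  rcases s.eq_empty_or_nonempty with rfl | hs
  · simp
  · exact hA s hs

lemma coeff_charpoly_neg_nonneg (hA : IsP0 A) (i : ℕ) : 0 ≤ (-A).charpoly.coeff i := by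
  rcases le_or_gt i n with hi | hi
  · obtain ⟨k, hk, rfl⟩ : ∃ k ≤ n, i = n - k := ⟨n - i, Nat.sub_le n i, by omega⟩
    have := charpoly_coeff_eq_sum_minors (-A) k (by simpa using hk)
    simp only [Fintype.card_fin] at this
    rw [this, Finset.mul_sum]
    refine Finset.sum_nonneg fun s hs => ?_
    rw [submatrix_neg, Pi.neg_apply, Pi.neg_apply, det_neg, Fintype.card_coe,
      (Finset.mem_powersetCard.1 hs).2, ← mul_assoc, ← mul_pow, neg_one_mul, neg_neg, one_pow,
      one_mul]
    exact hA.det_submatrix_nonneg s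
  · rw [coeff_eq_zero_of_natDegree_lt (by simpa using hi)]

theorem notMem_Fsector (hA : IsP0 A) {z : ℂ} (hz : z ∈ spectrum ℂ (A.map (algebraMap ℝ ℂ))) :
    z ∉ Fsector n := by
  rintro ⟨hz0, harg⟩
  have hn : (0 : ℝ) < n := by
    rcases n.eq_zero_or_pos with rfl | hn
    · simp [(abs_nonneg _).not_gt] at harg
    · exact_mod_cast hn
  refine aeval_ne_zero_of_coeff_nonneg (-A).charpoly_monic.ne_zero hA.coeff_charpoly_neg_nonneg
    (by simp : _ ≤ n) (neg_ne_zero.2 hz0) (by rwa [lt_div_iff₀ hn, mul_comm] at harg) ?_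
  rw [aeval_def, eval₂_eq_eval_map, ← IsRoot.def, ← mem_spectrum_map_iff_isRoot,
    Matrix.map_neg _ (map_neg _), ← spectrum.neg_eq]
  simpa using hz

end IsP0

/-- Kellogg: if all principal minors of a real `n×n` matrix `A` are
nonnegative then no eigenvalue of `A` lies in `F(n)`; consequently, if `A^k` is a
`P₀`-matrix then no eigenvalue `λ` of `A` has `λ^k ∈ F(n)`. -/
theorem p0_eigenvalues_avoid_sector (n : ℕ) :
    (∀ A : Matrix (Fin n) (Fin n) ℝ, IsP0 A → ∀ z : ℂ,
      ((A.charpoly).map (algebraMap ℝ ℂ)).IsRoot z → z ∉ Fsector n) ∧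
    (∀ (A : Matrix (Fin n) (Fin n) ℝ) (k : ℕ), 0 < k → IsP0 (A ^ k) → ∀ z : ℂ,
      ((A.charpoly).map (algebraMap ℝ ℂ)).IsRoot z → z ^ k ∉ Fsector n) := by
  refine ⟨fun A hA z hz => hA.notMem_Fsector ((mem_spectrum_map_iff_isRoot _ A z).2 hz),
    fun A k _ hA z hz => hA.notMem_Fsector ?_⟩
  rw [← RingHom.mapMatrix_apply, map_pow]
  exact spectrum.pow_mem_pow _ k ((mem_spectrum_map_iff_isRoot _ A z).2 hz)
end

section
/- Let A ∈ ℝ^{n×m} have rank s and suppose every square minor of every matrix in Q(A) has the same sign as the corresponding minor of A (equivalently, the weighted bipartite graph of A is 2-odd). Then for all k ≥ 1, every matrix of the form A_1A_2^T A_3⋯ with each A_i ∈ Q(A) (k factors, alternating transposes) has rank s; and every such product with an even number 2k of factors (hence square) has exactly n − s zero eigenvalues. -/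
/-!
Signed minors make all matrices of `Q(A)` behave alike. Each has rank `s = rank A`, and for
`X, Y ∈ Q(A)` and a row set `α` carrying a nonzero `s × s` minor of `A`, Cauchy–Binet writes
`det (X Yᵀ)[α, α]` as a sum of products `det X[α, γ] * det Y[α, γ]` of two minors of equal
sign, one of them nonzero; hence `rank (X Yᵀ) = rank (Xᵀ Y) = s`. As `rank (M N) = rank N` forces
`ker (M N) = ker N`, these equalities propagate along an alternating product, which therefore has
rank `s`. The square of an even product `P` is again an even product, so `ker P² = ker P`: the
generalised `0`-eigenspace of `P` is `ker P`, of dimension `n - s`.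
-/
open Matrix

/-- The alternating product `B 0 * (B 1)ᵀ * B 2 * (B 3)ᵀ * ⋯` with `2 * j` factors. -/
def altProdEven {n m : ℕ} (B : ℕ → Matrix (Fin n) (Fin m) ℝ) : ℕ → Matrix (Fin n) (Fin n) ℝ
  | 0 => 1
  | j + 1 => altProdEven B j * B (2 * j) * (B (2 * j + 1))ᵀ

open Finset Equiv Module

namespace Matrix

variable {ι l m n o : Type*}

section CommRing

variable {R : Type*} [CommRing R] [Fintype ι] [DecidableEq ι]

theorem det_submatrix_eq_zero_of_not_injective {M : Matrix m n R} {α : ι → m} {β : ι → n}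
    (h : ¬(Function.Injective α ∧ Function.Injective β)) : det (M.submatrix α β) = 0 := by
  simp_rw [not_and_or, Function.not_injective_iff] at h
  obtain ⟨i, j, hαij, hij⟩ | ⟨i, j, hβij, hij⟩ := h
  · rw [← det_transpose, transpose_submatrix]
    exact det_zero_of_column_eq hij (by simp [hαij])
  · exact det_zero_of_column_eq hij (by simp [hβij])

theorem det_transpose_submatrix (M : Matrix m n R) (α : ι → n) (β : ι → m) :
    det (Mᵀ.submatrix α β) = det (M.submatrix β α) := by
  rw [← transpose_submatrix, det_transpose]

theorem det_mul_eq_sum_det_submatrix_mul_prod [Fintype n] (X : Matrix ι n R) (Y : Matrix n ι R) :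
    det (X * Y) = ∑ p : ι → n, det (X.submatrix id p) * ∏ i, Y (p i) i := by
  simp only [det_apply', mul_apply, prod_univ_sum, mul_sum, Fintype.piFinset_univ, sum_mul]
  rw [sum_comm]
  refine sum_congr rfl fun p _ => sum_congr rfl fun σ _ => ?_
  simp [prod_mul_distrib, mul_assoc]

/-- Cauchy–Binet, summed over all maps `ι → n` rather than increasing ones: maps that are not
injective contribute `0`, and each set of columns is hit `(card ι)!` times. -/
theorem factorial_mul_det_mul [Fintype n] (X : Matrix ι n R) (Y : Matrix n ι R) :
    ((Fintype.card ι).factorial : R) * det (X * Y) =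
      ∑ p : ι → n, det (X.submatrix id p) * det (Y.submatrix p id) := by
  have h (σ : Perm ι) : det (X * Y) =
      ∑ p : ι → n, det (X.submatrix id p) * (Perm.sign σ * ∏ i, Y (p (σ i)) i) := by
    rw [det_mul_eq_sum_det_submatrix_mul_prod, ← (arrowCongr σ.symm (Equiv.refl n)).sum_comp]
    refine sum_congr rfl fun p _ => ?_
    change det ((X.submatrix id p).submatrix id σ) * ∏ i, Y (p (σ i)) i = _
    rw [det_permute']
    ring
  calc _ = ∑ σ : Perm ι, det (X * Y) := by simp [Fintype.card_perm]
    _ = ∑ p : ι → n,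
          det (X.submatrix id p) * ∑ σ : Perm ι, Perm.sign σ * ∏ i, Y (p (σ i)) i := by
      rw [sum_congr rfl fun σ _ => h σ, sum_comm]
      simp only [mul_sum]
    _ = _ := by simp only [det_apply', submatrix_apply, id]

theorem det_mul_pos [LinearOrder R] [IsStrictOrderedRing R] [Fintype n]
    (X : Matrix ι n R) (Y : Matrix n ι R)
    (hnonneg : ∀ p : ι → n, 0 ≤ det (X.submatrix id p) * det (Y.submatrix p id))
    {p₀ : ι → n} (hpos : 0 < det (X.submatrix id p₀) * det (Y.submatrix p₀ id)) :
    0 < det (X * Y) := by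
  have hsum : 0 < ((Fintype.card ι).factorial : R) * det (X * Y) := by
    rw [factorial_mul_det_mul]
    exact sum_pos' (fun p _ => hnonneg p) ⟨p₀, mem_univ _, hpos⟩
  exact pos_of_mul_pos_right hsum (by positivity)

end CommRing

section Field

variable {K : Type*} [Field K]

theorem rank_add_finrank_ker [Fintype n] (M : Matrix m n K) :
    M.rank + finrank K (LinearMap.ker M.mulVecLin) = Fintype.card n := by
  rw [rank, LinearMap.finrank_range_add_finrank_ker, Module.finrank_fintype_fun_eq_card]

theorem ker_mulVecLin_mul_eq_of_rank_eq [Fintype m] [Fintype n] {M : Matrix l m K}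
    {N : Matrix m n K} (h : (M * N).rank = N.rank) :
    LinearMap.ker (M * N).mulVecLin = LinearMap.ker N.mulVecLin := by
  have hle : LinearMap.ker N.mulVecLin ≤ LinearMap.ker (M * N).mulVecLin := by
    rw [mulVecLin_mul]
    exact LinearMap.ker_le_ker_comp _ _
  refine (Submodule.eq_of_le_of_finrank_le hle ?_).symm
  have := rank_add_finrank_ker (M * N)
  have := rank_add_finrank_ker N
  omega

theorem rank_mul_mul_eq_of_rank_mul_eq [Fintype m] [Fintype n] [Fintype o] {M : Matrix l m K}
    {N : Matrix m n K} (P : Matrix n o K) (h : (M * N).rank = N.rank) :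
    (M * N * P).rank = (N * P).rank := by
  have hker : LinearMap.ker (M * N * P).mulVecLin = LinearMap.ker (N * P).mulVecLin := by
    rw [mulVecLin_mul, mulVecLin_mul N, LinearMap.ker_comp, LinearMap.ker_comp,
      ker_mulVecLin_mul_eq_of_rank_eq h]
  have h₁ := rank_add_finrank_ker (M * N * P)
  have h₂ := rank_add_finrank_ker (N * P)
  rw [hker] at h₁
  omega

theorem exists_linearIndependent_rows [Fintype m] [Fintype n] (M : Matrix m n K) :
    ∃ α : Fin M.rank → m, LinearIndependent K fun i => M (α i) := by
  obtain ⟨κ, a, ha, hspan, hli⟩ := exists_linearIndependent' K M.row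
  have : Fintype κ := Fintype.ofInjective a ha
  have hcard : Fintype.card κ = M.rank := by
    rw [rank_eq_finrank_span_row, ← hspan, finrank_span_eq_card hli]
  exact ⟨a ∘ (Fintype.equivFinOfCardEq hcard).symm, hli.comp _ (Equiv.injective _)⟩

theorem exists_det_submatrix_ne_zero [Fintype m] [Fintype n] (M : Matrix m n K) :
    ∃ (α : Fin M.rank → m) (β : Fin M.rank → n), det (M.submatrix α β) ≠ 0 := by
  obtain ⟨α, hα⟩ := exists_linearIndependent_rows M
  have hrank : (M.submatrix α id)ᵀ.rank = M.rank := by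
    rw [rank_transpose, LinearIndependent.rank_matrix (M := M.submatrix α id) hα,
      Fintype.card_fin]
  obtain ⟨β, hβ⟩ := exists_linearIndependent_rows (M.submatrix α id)ᵀ
  refine ⟨α, β ∘ Fin.cast hrank.symm, fun h => ?_⟩
  rw [← det_transpose] at h
  have hrows := hβ.comp _ (Fin.cast_injective hrank.symm)
  exact ((isUnit_iff_isUnit_det _).1 (linearIndependent_rows_iff_isUnit.1 hrows)).ne_zero h

theorem le_rank_of_det_submatrix_ne_zero [Fintype n] {r : ℕ} {M : Matrix m n K}
    {α : Fin r → m} {β : Fin r → n} (h : det (M.submatrix α β) ≠ 0) : r ≤ M.rank := by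
  simpa [rank_of_det_ne_zero h] using rank_submatrix_le M α β

theorem le_rank_mul_transpose [Fintype m] [Fintype n] [LinearOrder K] [IsStrictOrderedRing K]
    {X Y : Matrix m n K}
    (hnonneg : ∀ (r : ℕ) (α : Fin r → m) (β : Fin r → n),
      0 ≤ det (X.submatrix α β) * det (Y.submatrix α β))
    {r : ℕ} {α : Fin r → m} {β : Fin r → n}
    (hpos : 0 < det (X.submatrix α β) * det (Y.submatrix α β)) : r ≤ (X * Yᵀ).rank := by
  have hminor (p : Fin r → n) :
      det ((X.submatrix α id).submatrix id p) * det ((Yᵀ.submatrix id α).submatrix p id) =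
        det (X.submatrix α p) * det (Y.submatrix α p) := by
    simp only [submatrix_submatrix, Function.comp_id, Function.id_comp, det_transpose_submatrix]
  refine le_rank_of_det_submatrix_ne_zero (α := α) (β := α) (ne_of_gt ?_)
  rw [submatrix_mul _ _ _ id _ Function.bijective_id]
  exact det_mul_pos _ _ (fun p => hminor p ▸ hnonneg r α p) (p₀ := β) (hminor β ▸ hpos)

end Field

end Matrix

theorem Module.End.rootMultiplicity_zero_charpoly_eq_finrank_ker {K V : Type*} [Field K]
    [AddCommGroup V] [Module K V] [FiniteDimensional K V] (f : Module.End K V)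
    (h : LinearMap.ker (f * f) = LinearMap.ker f) :
    f.charpoly.rootMultiplicity 0 = Module.finrank K (LinearMap.ker f) := by
  have hstable : LinearMap.ker (f ^ 1) = LinearMap.ker (f ^ 2) := by
    rw [pow_one, pow_two, h]
  have hmax : f.maxGenEigenspace 0 = LinearMap.ker f := by
    refine le_antisymm ?_ (f.eigenspace_zero ▸ eigenspace_le_maxGenEigenspace)
    rw [← iSup_genEigenspace_eq]
    refine iSup_le fun k => ?_
    calc f.genEigenspace 0 k = LinearMap.ker (f ^ k) := genEigenspace_zero_nat f k
      _ ≤ LinearMap.ker (f ^ (1 + k)) := by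
        rw [pow_add, pow_one, Module.End.mul_eq_comp]
        exact LinearMap.ker_le_ker_comp _ _
      _ = LinearMap.ker f := by rw [← ker_pow_constant hstable k, pow_one]
  rw [← LinearMap.finrank_maxGenEigenspace_eq, hmax]

theorem Matrix.rootMultiplicity_zero_charpoly_eq_of_rank_mul_self {K n : Type*} [Field K]
    [Fintype n] [DecidableEq n] {P : Matrix n n K} (h : (P * P).rank = P.rank) :
    P.charpoly.rootMultiplicity 0 = Fintype.card n - P.rank := by
  rw [← charpoly_mulVecLin, Module.End.rootMultiplicity_zero_charpoly_eq_finrank_ker]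
  · have := Matrix.rank_add_finrank_ker P
    omega
  · rw [Module.End.mul_eq_comp, ← Matrix.mulVecLin_mul, Matrix.ker_mulVecLin_mul_eq_of_rank_eq h]

theorem Real.mul_nonneg_of_sign_eq {x y : ℝ} (h : Real.sign x = Real.sign y) : 0 ≤ x * y := by
  rcases lt_trichotomy x 0 with hx | rfl | hx <;> rcases lt_trichotomy y 0 with hy | rfl | hy <;>
    simp_all [Real.sign_of_neg, Real.sign_of_pos] <;> nlinarith

def HasSignedMinors {n m : ℕ} (A : Matrix (Fin n) (Fin m) ℝ) : Prop :=
  ∀ A₁ ∈ Qual A, ∀ (r : ℕ) (α : Fin r → Fin n) (β : Fin r → Fin m),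
    Function.Injective α → Function.Injective β →
    Real.sign ((A₁.submatrix α β).det) = Real.sign ((A.submatrix α β).det)

namespace HasSignedMinors

variable {n m r : ℕ} {A X Y : Matrix (Fin n) (Fin m) ℝ}

theorem sign_det_submatrix (hA : HasSignedMinors A) (hX : X ∈ Qual A) (α : Fin r → Fin n)
    (β : Fin r → Fin m) :
    Real.sign (X.submatrix α β).det = Real.sign (A.submatrix α β).det := by
  by_cases h : Function.Injective α ∧ Function.Injective β
  · exact hA X hX r α β h.1 h.2
  · rw [det_submatrix_eq_zero_of_not_injective h, det_submatrix_eq_zero_of_not_injective h]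

theorem det_submatrix_eq_zero_iff (hA : HasSignedMinors A) (hX : X ∈ Qual A)
    {α : Fin r → Fin n} {β : Fin r → Fin m} :
    (X.submatrix α β).det = 0 ↔ (A.submatrix α β).det = 0 := by
  rw [← Real.sign_eq_zero_iff, sign_det_submatrix hA hX, Real.sign_eq_zero_iff]

theorem rank_eq (hA : HasSignedMinors A) (hX : X ∈ Qual A) : X.rank = A.rank := by
  obtain ⟨α, β, hXαβ⟩ := exists_det_submatrix_ne_zero X
  obtain ⟨γ, δ, hAγδ⟩ := exists_det_submatrix_ne_zero A
  exact le_antisymm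
    (le_rank_of_det_submatrix_ne_zero ((det_submatrix_eq_zero_iff hA hX).not.1 hXαβ))
    (le_rank_of_det_submatrix_ne_zero ((det_submatrix_eq_zero_iff hA hX).not.2 hAγδ))

theorem det_submatrix_mul_nonneg (hA : HasSignedMinors A) (hX : X ∈ Qual A) (hY : Y ∈ Qual A)
    (α : Fin r → Fin n) (β : Fin r → Fin m) :
    0 ≤ (X.submatrix α β).det * (Y.submatrix α β).det :=
  Real.mul_nonneg_of_sign_eq
    ((sign_det_submatrix hA hX α β).trans (sign_det_submatrix hA hY α β).symm)

theorem det_submatrix_mul_pos (hA : HasSignedMinors A) (hX : X ∈ Qual A) (hY : Y ∈ Qual A)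
    {α : Fin r → Fin n} {β : Fin r → Fin m} (h : (A.submatrix α β).det ≠ 0) :
    0 < (X.submatrix α β).det * (Y.submatrix α β).det :=
  (det_submatrix_mul_nonneg hA hX hY α β).lt_of_ne' (mul_ne_zero
    ((det_submatrix_eq_zero_iff hA hX).not.2 h) ((det_submatrix_eq_zero_iff hA hY).not.2 h))

theorem rank_mul_transpose (hA : HasSignedMinors A) (hX : X ∈ Qual A) (hY : Y ∈ Qual A) :
    (X * Yᵀ).rank = A.rank := by
  obtain ⟨α, β, h⟩ := exists_det_submatrix_ne_zero A
  exact le_antisymm ((rank_mul_le_left _ _).trans_eq (rank_eq hA hX))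
    (le_rank_mul_transpose (fun _ => det_submatrix_mul_nonneg hA hX hY)
      (det_submatrix_mul_pos hA hX hY h))

theorem rank_transpose_mul (hA : HasSignedMinors A) (hX : X ∈ Qual A) (hY : Y ∈ Qual A) :
    (Xᵀ * Y).rank = A.rank := by
  obtain ⟨α, β, h⟩ := exists_det_submatrix_ne_zero A
  refine le_antisymm ((rank_mul_le_right _ _).trans_eq (rank_eq hA hY)) ?_
  simpa using le_rank_mul_transpose (X := Xᵀ) (Y := Yᵀ) (α := β) (β := α)
    (fun _ γ δ => by
      simpa only [det_transpose_submatrix] using det_submatrix_mul_nonneg hA hX hY δ γ)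
    (by simpa only [det_transpose_submatrix] using det_submatrix_mul_pos hA hX hY h)

end HasSignedMinors

section altProdEven

variable {n m : ℕ}

theorem altProdEven_congr {Bs Cs : ℕ → Matrix (Fin n) (Fin m) ℝ} :
    ∀ {j : ℕ}, (∀ i < 2 * j, Bs i = Cs i) → altProdEven Bs j = altProdEven Cs j
  | 0, _ => rfl
  | j + 1, h => by
    rw [altProdEven, altProdEven, altProdEven_congr fun i hi => h i (by omega),
      h (2 * j) (by omega), h (2 * j + 1) (by omega)]

theorem altProdEven_add (Bs : ℕ → Matrix (Fin n) (Fin m) ℝ) (a : ℕ) :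
    ∀ b : ℕ, altProdEven Bs (a + b) = altProdEven Bs a * altProdEven (fun i => Bs (2 * a + i)) b
  | 0 => (mul_one _).symm
  | b + 1 => by
    rw [← add_assoc, altProdEven, altProdEven, altProdEven_add Bs a b, Matrix.mul_assoc,
      Matrix.mul_assoc, Matrix.mul_assoc, mul_add, add_assoc]

theorem altProdEven_mul_self (Bs : ℕ → Matrix (Fin n) (Fin m) ℝ) (j : ℕ) :
    altProdEven Bs j * altProdEven Bs j = altProdEven (fun i => Bs (i % (2 * j))) (j + j) := by
  rw [altProdEven_add]
  congr 1 <;> refine altProdEven_congr fun i hi => ?_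
  · rw [Nat.mod_eq_of_lt hi]
  · rw [Nat.add_mod_left, Nat.mod_eq_of_lt hi]

variable {s : ℕ} {Bs : ℕ → Matrix (Fin n) (Fin m) ℝ}

theorem rank_altProdEven_mul (hB : ∀ i, (Bs i).rank = s)
    (hBBt : ∀ i j, (Bs i * (Bs j)ᵀ).rank = s) (hBtB : ∀ i j, ((Bs i)ᵀ * Bs j).rank = s) (j : ℕ) :
    (altProdEven Bs j * Bs (2 * j)).rank = s := by
  induction j with
  | zero => simpa [altProdEven] using hB 0
  | succ j ih =>
    calc (altProdEven Bs (j + 1) * Bs (2 * (j + 1))).rank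
        = (altProdEven Bs j * Bs (2 * j) * ((Bs (2 * j + 1))ᵀ * Bs (2 * j + 2))).rank := by
          rw [altProdEven, Matrix.mul_assoc _ (Bs (2 * j + 1))ᵀ, mul_add_one]
      _ = (Bs (2 * j) * (Bs (2 * j + 1))ᵀ * Bs (2 * j + 2)).rank := by
          rw [rank_mul_mul_eq_of_rank_mul_eq _ (ih.trans (hB _).symm), Matrix.mul_assoc]
      _ = s := by
          rw [rank_mul_mul_eq_of_rank_mul_eq _ (by rw [hBBt, rank_transpose, hB]), hBtB]

theorem rank_altProdEven (hB : ∀ i, (Bs i).rank = s)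
    (hBBt : ∀ i j, (Bs i * (Bs j)ᵀ).rank = s) (hBtB : ∀ i j, ((Bs i)ᵀ * Bs j).rank = s)
    {j : ℕ} (hj : 0 < j) : (altProdEven Bs j).rank = s := by
  obtain ⟨j, rfl⟩ := Nat.exists_eq_add_of_lt hj
  rw [zero_add, altProdEven, rank_mul_mul_eq_of_rank_mul_eq _
    ((rank_altProdEven_mul hB hBBt hBtB j).trans (hB _).symm), hBBt]

end altProdEven

/-- let `A` have rank `s`, and suppose every square minor of every matrix in
`Q(A)` has the same sign as the corresponding minor of `A` (the matrix version of the
weighted bipartite graph of `A` being 2-odd).  Then every alternating product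
`A₁ A₂ᵀ A₃ ⋯` of matrices from `Q(A)` has rank `s` (stated separately for an even number
`2j` and an odd number `2j + 1` of factors), and every such square product (an even number
of factors) has exactly `n - s` zero eigenvalues. -/
theorem rank_and_zero_eigenvalues_of_alt_products {n m s : ℕ}
    (A : Matrix (Fin n) (Fin m) ℝ) (hrank : A.rank = s)
    (hsigned : ∀ A₁ ∈ Qual A, ∀ (r : ℕ) (α : Fin r → Fin n) (β : Fin r → Fin m),
      Function.Injective α → Function.Injective β →
      Real.sign ((A₁.submatrix α β).det) = Real.sign ((A.submatrix α β).det)) :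
    ∀ Bs : ℕ → Matrix (Fin n) (Fin m) ℝ, (∀ i, Bs i ∈ Qual A) →
      (∀ j : ℕ, 1 ≤ j → (altProdEven Bs j).rank = s) ∧
      (∀ j : ℕ, (altProdEven Bs j * Bs (2 * j)).rank = s) ∧
      (∀ j : ℕ, 1 ≤ j →
        Polynomial.rootMultiplicity (0 : ℝ) (altProdEven Bs j).charpoly = n - s) := by
  intro Bs hBs
  have hA : HasSignedMinors A := hsigned
  subst hrank
  have hB i := hA.rank_eq (hBs i)
  have hBBt i j := hA.rank_mul_transpose (hBs i) (hBs j)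
  have hBtB i j := hA.rank_transpose_mul (hBs i) (hBs j)
  have hP {j} (hj : 1 ≤ j) := rank_altProdEven hB hBBt hBtB hj
  refine ⟨@hP, rank_altProdEven_mul hB hBBt hBtB, fun j hj => ?_⟩
  have hsq : (altProdEven Bs j * altProdEven Bs j).rank = (altProdEven Bs j).rank := by
    rw [altProdEven_mul_self, hP hj,
      rank_altProdEven (fun _ => hB _) (fun _ _ => hBBt _ _) (fun _ _ => hBtB _ _) (by omega)]
  rw [rootMultiplicity_zero_charpoly_eq_of_rank_mul_self hsq, Fintype.card_fin, hP hj]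
end
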